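/- arXiv:1405.5064 — 14 statements merged into one kernel-verified Lean document; each statement's English description precedes it below -/
import Mathlib

section
/- Let B be a compact metric space and F : B → B a continuous map. Then every non-wandering point of F belongs to ⋂_{l ≥ 0} F^l(B). -/
/-- A point `x` is non-wandering for `h` if for every neighborhood `U` of `x`
there is `n ≥ 1` with `h^n(U) ∩ U ≠ ∅`. -/
def NonWandering {X : Type*} [TopologicalSpace X] (h : X → X) (x : X) : Prop :=
  ∀ U ∈ nhds x, ∃ n ≥ 1, (h^[n] '' U ∩ U).Nonempty

/-- Let B be a compact metric space and F : B → B a continuous map.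
Then every non-wandering point of F belongs to ⋂_{l ≥ 0} F^l(B). -/
theorem stmt1 {B : Type*} [MetricSpace B] [CompactSpace B]
    (F : B → B) (hFc : Continuous F) (x : B) (hx : NonWandering F x) :
    x ∈ ⋂ l : ℕ, F^[l] '' Set.univ := by
  simp only [Set.mem_iInter]
  intro l
  rcases Nat.eq_zero_or_pos l with rfl | hl
  · simp
  by_cases hper : ∃ n, 1 ≤ n ∧ n < l ∧ F^[n] x = x
  · obtain ⟨n, hn1, _, hnx⟩ := hper
    refine ⟨F^[n * l - l] x, trivial, ?_⟩
    have h1 : F^[l] (F^[n * l - l] x) = F^[n * l] x := by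
      rw [← Function.iterate_add_apply]
      congr 1
      have : l ≤ n * l := Nat.le_mul_of_pos_left l hn1
      omega
    have h2 : F^[n * l] x = x := by
      rw [Function.iterate_mul]
      exact Function.iterate_fixed hnx l
    rw [h1, h2]
  push_neg at hper
  by_contra hxS
  have hS : IsClosed (F^[l] '' Set.univ) :=
    (isCompact_univ.image (hFc.iterate l)).isClosed
  have hUn : ∀ n : ℕ, ∃ V ∈ nhds x, 1 ≤ n → n < l → ∀ y ∈ V, F^[n] y ∉ V := by
    intro n
    by_cases hcond : 1 ≤ n ∧ n < l
    · have hne : F^[n] x ≠ x := hper n hcond.1 hcond.2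
      obtain ⟨A, C, hA, hC, hxA, hxC, hAC⟩ := t2_separation hne
      refine ⟨C ∩ F^[n] ⁻¹' A, Filter.inter_mem (hC.mem_nhds hxC)
        ((hFc.iterate n).continuousAt.preimage_mem_nhds (hA.mem_nhds hxA)), ?_⟩
      intro _ _ y hy hcon
      exact Set.disjoint_left.mp hAC hy.2 hcon.1
    · exact ⟨Set.univ, Filter.univ_mem, fun h1 h2 _ _ => absurd ⟨h1, h2⟩ hcond⟩
  choose V hVmem hVprop using hUn
  set U : Set B := (F^[l] '' Set.univ)ᶜ ∩ ⋂ n ∈ Finset.Ico 1 l, V n with hUdef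
  have hU : U ∈ nhds x := by
    refine Filter.inter_mem (hS.isOpen_compl.mem_nhds hxS) ?_
    exact (Filter.biInter_finset_mem _).mpr fun n _ => hVmem n
  obtain ⟨n, hn1, z, ⟨y, hyU, rfl⟩, hzU⟩ := hx U hU
  rcases le_or_gt l n with hln | hnl
  · apply hzU.1
    refine ⟨F^[n - l] y, trivial, ?_⟩
    rw [← Function.iterate_add_apply]
    congr 1
    omega
  · have hyV : y ∈ V n := by
      have := hyU.2
      simp only [Set.mem_iInter] at this
      exact this n (Finset.mem_Ico.mpr ⟨hn1, hnl⟩)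
    have hzV : F^[n] y ∈ V n := by
      have := hzU.2
      simp only [Set.mem_iInter] at this
      exact this n (Finset.mem_Ico.mpr ⟨hn1, hnl⟩)
    exact hVprop n hn1 hnl y hyV hzV
end

section
/- Given any point p ∈ S, there exists a unique sequence of points (t_0, t_1, t_2, …) in T such that g(t_{i+1}) = t_i for all i ≥ 0, p ∈ F^i({t_i} × N) for all i ≥ 0 (so the sets F^i({t_i} × N) form a nested decreasing sequence), and ⋂_{i ≥ 0} F^i({t_i} × N) = {p}. -/
/-- with the Smale skew-mapping setup, every point p of
S = ⋂_{l ≥ 0} F^l(T × N) has a unique itinerary sequence (t_i) with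
g(t_{i+1}) = t_i, p ∈ F^i({t_i} × N) for all i, and ⋂_i F^i({t_i} × N) = {p}. -/
theorem stmt2 {T N : Type*} [MetricSpace T] [CompactSpace T] [Nonempty T]
    [MetricSpace N] [CompactSpace N] [Nonempty N]
    (g : T → T) (hgc : Continuous g) (hgs : Function.Surjective g)
    (F : T × N → T × N) (hFc : Continuous F) (hFi : Function.Injective F)
    (hfib : ∀ p : T × N, (F p).1 = g p.1)
    (C lam : ℝ) (hC : 0 < C) (hlam0 : 0 < lam) (hlam1 : lam < 1)
    (hcontr : ∀ (t : T) (n : ℕ),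
      Metric.diam (F^[n] '' ({t} ×ˢ (Set.univ : Set N))) ≤ C * lam ^ n)
    (S : Set (T × N)) (hS : S = ⋂ l : ℕ, F^[l] '' Set.univ) :
    ∀ p ∈ S, ∃! t : ℕ → T,
      (∀ i : ℕ, g (t (i + 1)) = t i) ∧
      (∀ i : ℕ, p ∈ F^[i] '' ({t i} ×ˢ (Set.univ : Set N))) ∧
      (⋂ i : ℕ, F^[i] '' ({t i} ×ˢ (Set.univ : Set N))) = {p} := by
  intro p hp
  rw [hS, Set.mem_iInter] at hp
  have hIi : ∀ i : ℕ, Function.Injective (F^[i]) := fun i => hFi.iterate i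
  -- choose preimages
  have hq : ∀ i : ℕ, ∃ q : T × N, F^[i] q = p := by
    intro i
    obtain ⟨q, -, hq⟩ := hp i
    exact ⟨q, hq⟩
  choose q hqeq using hq
  refine ⟨fun i => (q i).1, ⟨?_, ?_, ?_⟩, ?_⟩
  · intro i
    have h1 : F^[i] (F (q (i + 1))) = F^[i] (q i) := by
      rw [hqeq i, ← hqeq (i + 1), ← Function.iterate_succ_apply]
    have h2 : F (q (i + 1)) = q i := hIi i h1
    show g (q (i+1)).1 = (q i).1
    rw [← hfib, h2]
  · intro i
    exact ⟨q i, by simp, hqeq i⟩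
  · apply Set.eq_singleton_iff_unique_mem.mpr
    constructor
    · exact Set.mem_iInter.mpr fun i => ⟨q i, by simp, hqeq i⟩
    · intro x hx
      rw [Set.mem_iInter] at hx
      have hd : ∀ i : ℕ, dist x p ≤ C * lam ^ i := by
        intro i
        have hb : Bornology.IsBounded (F^[i] '' ({(q i).1} ×ˢ (Set.univ : Set N))) := by
          have : IsCompact (F^[i] '' ({(q i).1} ×ˢ (Set.univ : Set N))) :=
            ((isCompact_singleton.prod isCompact_univ).image (hFc.iterate i))
          exact this.isBounded
        calc dist x p ≤ Metric.diam (F^[i] '' ({(q i).1} ×ˢ (Set.univ : Set N))) :=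
              Metric.dist_le_diam_of_mem hb (hx i) ⟨q i, by simp, hqeq i⟩
          _ ≤ C * lam ^ i := hcontr _ i
      have hlim : Filter.Tendsto (fun i : ℕ => C * lam ^ i) Filter.atTop (nhds 0) := by
        have := tendsto_pow_atTop_nhds_zero_of_lt_one hlam0.le hlam1
        simpa using this.const_mul C
      have : dist x p ≤ 0 := ge_of_tendsto hlim (Filter.Eventually.of_forall hd)
      exact dist_le_zero.mp this
  · rintro t ⟨-, ht2, -⟩
    funext i
    obtain ⟨w, hw, hweq⟩ := ht2 i
    have : w = q i := hIi i (by rw [hweq, hqeq])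
    have hw1 : w.1 = t i := hw.1
    rw [← hw1, this]
end

section
/- The map θ : S → Π_g, sending each p ∈ S to its unique itinerary sequence, is a homeomorphism of S onto Π_g. -/
/-!
Write `F^n({t} × N)` for the image of a fiber under `F^n`. These sets shrink geometrically, so a
point of `S` is pinned down by its itinerary, and `θ` is injective. Conversely, for a point
`(t_i)` of the inverse limit the compact sets `F^i({t_i} × N)` are nested, because `F` maps the
fiber over `t` into the fiber over `g t`; so their intersection is nonempty, and any of its points
has itinerary `(t_i)`. Each coordinate of `θ` is continuous because `F^i` is a closed embedding,
and a continuous bijection from the compact set `S` onto the Hausdorff space `Π_g` is a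
homeomorphism.
-/

/-- The inverse limit Π_g of a map g : T → T: sequences (t_0, t_1, …) in T
with g(t_{i+1}) = t_i for all i, topologized as a subspace of the product T^ℕ. -/
abbrev InvLim {T : Type*} (g : T → T) : Type _ :=
  {t : ℕ → T // ∀ i : ℕ, g (t (i + 1)) = t i}

open Set Function Filter Topology

section FiberImage

variable {X Y : Type*}

def fiberImage (F : X × Y → X × Y) (n : ℕ) (x : X) : Set (X × Y) :=
  F^[n] '' ({x} ×ˢ univ)

theorem fiberImage_nonempty [Nonempty Y] (F : X × Y → X × Y) (n : ℕ) (x : X) :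
    (fiberImage F n x).Nonempty :=
  ((singleton_nonempty x).prod univ_nonempty).image _

theorem fiberImage_subset_image_univ (F : X × Y → X × Y) (n : ℕ) (x : X) :
    fiberImage F n x ⊆ F^[n] '' univ :=
  image_mono (subset_univ _)

theorem fiberImage_succ_subset {g : X → X} {F : X × Y → X × Y} (hfib : ∀ p, (F p).1 = g p.1)
    (n : ℕ) (x : X) : fiberImage F (n + 1) x ⊆ fiberImage F n (g x) := by
  rintro _ ⟨q, ⟨hq, -⟩, rfl⟩
  refine ⟨F q, ⟨?_, mem_univ _⟩, (iterate_succ_apply F n q).symm⟩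
  rw [mem_singleton_iff, hfib, mem_singleton_iff.mp hq]

theorem eq_of_mem_fiberImage {F : X × Y → X × Y} (hF : Injective F) {n : ℕ} {p : X × Y}
    {x x' : X} (hx : p ∈ fiberImage F n x) (hx' : p ∈ fiberImage F n x') : x = x' := by
  obtain ⟨q, ⟨hq, -⟩, rfl⟩ := hx
  obtain ⟨q', ⟨hq', -⟩, hqq'⟩ := hx'
  rw [← mem_singleton_iff.mp hq, ← mem_singleton_iff.mp hq', hF.iterate n hqq']

variable [TopologicalSpace X] [TopologicalSpace Y]

theorem isCompact_fiberImage [CompactSpace Y] {F : X × Y → X × Y} (hF : Continuous F) (n : ℕ)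
    (x : X) : IsCompact (fiberImage F n x) :=
  (isCompact_singleton.prod isCompact_univ).image (hF.iterate n)

theorem nonempty_iInter_fiberImage [CompactSpace Y] [Nonempty Y] [T2Space X] [T2Space Y]
    {g : X → X} {F : X × Y → X × Y} (hF : Continuous F) (hfib : ∀ p, (F p).1 = g p.1)
    (t : InvLim g) : (⋂ n, fiberImage F n (t.1 n)).Nonempty := by
  refine IsCompact.nonempty_iInter_of_sequence_nonempty_isCompact_isClosed _ (fun n => ?_)
    (fun n => fiberImage_nonempty F n _) (isCompact_fiberImage hF 0 _)
    (fun n => (isCompact_fiberImage hF n _).isClosed)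
  simpa only [t.2 n] using fiberImage_succ_subset hfib n (t.1 (n + 1))

theorem Continuous.of_forall_mem_fiberImage {α : Type*} [TopologicalSpace α]
    {F : X × Y → X × Y} {n : ℕ} (hF : IsEmbedding F^[n]) {f : α → X × Y} (hf : Continuous f)
    {τ : α → X} (hτ : ∀ a, f a ∈ fiberImage F n (τ a)) : Continuous τ := by
  choose ψ hψ hψf using hτ
  have hψc : Continuous ψ := hF.continuous_iff.mpr (by simpa only [comp_def, hψf] using hf)
  have hτψ : τ = fun a => (ψ a).1 := funext fun a => ((hψ a).1 : (ψ a).1 = τ a).symm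
  exact hτψ ▸ continuous_fst.comp hψc

end FiberImage

theorem eq_of_forall_mem_of_diam_le_geometric {X : Type*} [MetricSpace X] {A : ℕ → Set X}
    {C lam : ℝ} (hlam0 : 0 ≤ lam) (hlam1 : lam < 1) (hA : ∀ n, Bornology.IsBounded (A n))
    (hdiam : ∀ n, Metric.diam (A n) ≤ C * lam ^ n) {x y : X} (hx : ∀ n, x ∈ A n)
    (hy : ∀ n, y ∈ A n) : x = y := by
  have hlim : Tendsto (fun n : ℕ => C * lam ^ n) atTop (𝓝 0) := by
    simpa using (tendsto_pow_atTop_nhds_zero_of_lt_one hlam0 hlam1).const_mul C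
  refine dist_le_zero.mp (ge_of_tendsto' hlim fun n => ?_)
  exact (Metric.dist_le_diam_of_mem (hA n) (hx n) (hy n)).trans (hdiam n)

theorem stmt3_general {T N : Type*} [MetricSpace T] [CompactSpace T]
    [MetricSpace N] [CompactSpace N] [Nonempty N]
    (g : T → T)
    (F : T × N → T × N) (hFc : Continuous F) (hFi : Function.Injective F)
    (hfib : ∀ p : T × N, (F p).1 = g p.1)
    (C lam : ℝ) (hlam0 : 0 < lam) (hlam1 : lam < 1)
    (hcontr : ∀ (t : T) (n : ℕ),
      Metric.diam (F^[n] '' ({t} ×ˢ (Set.univ : Set N))) ≤ C * lam ^ n)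
    (S : Set (T × N)) (hS : S = ⋂ l : ℕ, F^[l] '' Set.univ)
    (θ : S → InvLim g)
    (hθ : ∀ (p : S) (i : ℕ),
      (p : T × N) ∈ F^[i] '' ({(θ p).1 i} ×ˢ (Set.univ : Set N))) :
    ∃ e : S ≃ₜ InvLim g, ∀ p : S, e p = θ p := by
  have hScl : IsClosed S :=
    hS ▸ isClosed_iInter fun l => (isCompact_univ.image (hFc.iterate l)).isClosed
  have : CompactSpace S := isCompact_iff_compactSpace.mp hScl.isCompact
  have hinj : Injective θ := fun p q hpq =>
    Subtype.ext <| eq_of_forall_mem_of_diam_le_geometric hlam0.le hlam1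
      (fun n => (isCompact_fiberImage hFc n ((θ p).1 n)).isBounded) (fun n => hcontr _ n)
      (hθ p) (hpq ▸ hθ q)
  have hsurj : Surjective θ := by
    intro t
    obtain ⟨p, hp⟩ := nonempty_iInter_fiberImage hFc hfib t
    have hpS : p ∈ S := hS ▸ mem_iInter.mpr fun l =>
      fiberImage_subset_image_univ F l _ (mem_iInter.mp hp l)
    exact ⟨⟨p, hpS⟩, Subtype.ext <| funext fun i =>
      eq_of_mem_fiberImage hFi (hθ ⟨p, hpS⟩ i) (mem_iInter.mp hp i)⟩
  have hcont : Continuous θ := by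
    refine continuous_induced_rng.mpr (continuous_pi fun i => ?_)
    exact Continuous.of_forall_mem_fiberImage
      ((hFc.iterate i).isClosedEmbedding (hFi.iterate i)).isEmbedding continuous_subtype_val
      (fun p => hθ p i)
  exact ⟨hcont.homeoOfEquivCompactToT2 (f := Equiv.ofBijective θ ⟨hinj, hsurj⟩), fun _ => rfl⟩

/-- the itinerary map θ : S → Π_g is a homeomorphism of S onto Π_g. -/
theorem stmt3 {T N : Type*} [MetricSpace T] [CompactSpace T] [Nonempty T]
    [MetricSpace N] [CompactSpace N] [Nonempty N]
    (g : T → T) (hgc : Continuous g) (hgs : Function.Surjective g)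
    (hgcov : IsCoveringMap g)
    (F : T × N → T × N) (hFc : Continuous F) (hFi : Function.Injective F)
    (hfib : ∀ p : T × N, (F p).1 = g p.1)
    (C lam : ℝ) (hC : 0 < C) (hlam0 : 0 < lam) (hlam1 : lam < 1)
    (hcontr : ∀ (t : T) (n : ℕ),
      Metric.diam (F^[n] '' ({t} ×ˢ (Set.univ : Set N))) ≤ C * lam ^ n)
    (S : Set (T × N)) (hS : S = ⋂ l : ℕ, F^[l] '' Set.univ)
    (θ : S → InvLim g)
    (hθ : ∀ (p : S) (i : ℕ),
      (p : T × N) ∈ F^[i] '' ({(θ p).1 i} ×ˢ (Set.univ : Set N))) :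
    ∃ e : S ≃ₜ InvLim g, ∀ p : S, e p = θ p :=
  stmt3_general g F hFc hFi hfib C lam hlam0 hlam1 hcontr S hS θ hθ
end

section
/- The restriction of F to S is topologically conjugate to the inverse limit of g: the map θ : S → Π_g is a homeomorphism satisfying θ ∘ (F restricted to S) = ĝ ∘ θ. -/
/-- The shift map ĝ : Π_g → Π_g, ĝ(t_0, t_1, …) = (g(t_0), t_0, t_1, …). -/
def shiftMap {T : Type*} (g : T → T) (t : InvLim g) : InvLim g :=
  ⟨fun i => Nat.casesOn i (g (t.1 0)) fun j => t.1 j, by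
    intro i
    cases i with
    | zero => rfl
    | succ j => exact t.2 j⟩

open Set Function Filter Topology

theorem eq_of_mem_image_prod_univ {X N Y : Type*} {f : X × N → Y} (hf : Injective f)
    {y : Y} {t t' : X} (h : y ∈ f '' ({t} ×ˢ univ)) (h' : y ∈ f '' ({t'} ×ˢ univ)) :
    t = t' := by
  obtain ⟨a, ⟨rfl : a.1 = t, -⟩, rfl⟩ := h
  obtain ⟨b, ⟨rfl : b.1 = t', -⟩, hb⟩ := h'
  rw [hf hb]

theorem continuous_of_mem_image_prod_univ {X N Y Z : Type*} [TopologicalSpace X]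
    [TopologicalSpace N] [TopologicalSpace Y] [TopologicalSpace Z] {f : X × N → Y}
    (hf : IsEmbedding f) {u : Z → Y} (hu : Continuous u) {τ : Z → X}
    (h : ∀ z, u z ∈ f '' ({τ z} ×ˢ univ)) : Continuous τ := by
  choose σ hσ hfσ using h
  have hσc : Continuous σ := hf.continuous_iff.mpr (by simpa only [comp_def, hfσ] using hu)
  have hτ : τ = Prod.fst ∘ σ := funext fun z => (hσ z).1.symm
  exact hτ ▸ continuous_fst.comp hσc

theorem eq_of_forall_dist_le_mul_pow {X : Type*} [MetricSpace X] {x y : X}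
    {C r : ℝ} (hr0 : 0 ≤ r) (hr1 : r < 1) (h : ∀ n : ℕ, dist x y ≤ C * r ^ n) : x = y := by
  have hlim : Tendsto (fun n : ℕ => C * r ^ n) atTop (𝓝 0) := by
    simpa using (tendsto_pow_atTop_nhds_zero_of_lt_one hr0 hr1).const_mul C
  exact dist_le_zero.mp (ge_of_tendsto hlim (Eventually.of_forall h))

section Iterates

variable {X : Type*} (f : X → X)

theorem mapsTo_iInter_iterate_image_univ :
    MapsTo f (⋂ l : ℕ, f^[l] '' univ) (⋂ l : ℕ, f^[l] '' univ) := by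
  intro x hx
  refine mem_iInter.mpr fun l => ?_
  cases l with
  | zero => simp
  | succ j =>
    rw [iterate_succ', image_comp]
    exact mem_image_of_mem f (mem_iInter.mp hx j)

theorem isClosed_iInter_iterate_image_univ [TopologicalSpace X] [CompactSpace X] [T2Space X]
    {f : X → X} (hf : Continuous f) : IsClosed (⋂ l : ℕ, f^[l] '' univ) :=
  isClosed_iInter fun l => (isCompact_univ.image (hf.iterate l)).isClosed

end Iterates

section FibredMaps

variable {T N : Type*} {g : T → T} {F : T × N → T × N}

theorem image_prod_univ_subset (hfib : ∀ p : T × N, (F p).1 = g p.1) (t : T) :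
    F '' ({t} ×ˢ univ) ⊆ {g t} ×ˢ (univ : Set N) := by
  rintro _ ⟨a, ⟨rfl : a.1 = t, -⟩, rfl⟩
  exact ⟨hfib a, mem_univ _⟩

theorem antitone_iterate_image_prod_univ (hfib : ∀ p : T × N, (F p).1 = g p.1)
    (t : InvLim g) : Antitone fun n : ℕ => F^[n] '' ({t.1 n} ×ˢ (univ : Set N)) := by
  refine antitone_nat_of_succ_le fun n => ?_
  simp only [iterate_succ, image_comp]
  exact image_mono (t.2 n ▸ image_prod_univ_subset hfib (t.1 (n + 1)))

theorem mem_iterate_image_prod_univ_shiftMap (hfib : ∀ p : T × N, (F p).1 = g p.1)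
    {p : T × N} {t : InvLim g} (hp : ∀ i : ℕ, p ∈ F^[i] '' ({t.1 i} ×ˢ (univ : Set N)))
    (i : ℕ) : F p ∈ F^[i] '' ({(shiftMap g t).1 i} ×ˢ (univ : Set N)) := by
  cases i with
  | zero =>
    show F p ∈ F^[0] '' ({g (t.1 0)} ×ˢ univ)
    rw [iterate_zero, image_id]
    exact image_prod_univ_subset hfib (t.1 0)
      (mem_image_of_mem F (by simpa only [iterate_zero, image_id] using hp 0))
  | succ j =>
    rw [iterate_succ', image_comp]
    exact mem_image_of_mem F (hp j)

theorem nonempty_iInter_iterate_image_prod_univ [TopologicalSpace T] [TopologicalSpace N]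
    [CompactSpace T] [CompactSpace N] [T2Space T] [T2Space N] [Nonempty N]
    (hFc : Continuous F) (hfib : ∀ p : T × N, (F p).1 = g p.1) (t : InvLim g) :
    (⋂ n : ℕ, F^[n] '' ({t.1 n} ×ˢ (univ : Set N))).Nonempty := by
  have hK : ∀ n : ℕ, IsCompact (F^[n] '' ({t.1 n} ×ˢ (univ : Set N))) := fun n =>
    (isCompact_singleton.prod isCompact_univ).image (hFc.iterate n)
  exact IsCompact.nonempty_iInter_of_sequence_nonempty_isCompact_isClosed _
    (fun n => antitone_iterate_image_prod_univ hfib t n.le_succ)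
    (fun n => ((singleton_nonempty _).prod univ_nonempty).image _) (hK 0)
    fun n => (hK n).isClosed

theorem eq_of_forall_mem_iterate_image_prod_univ [MetricSpace T] [MetricSpace N]
    [CompactSpace T] [CompactSpace N] {C lam : ℝ} (hlam0 : 0 < lam) (hlam1 : lam < 1)
    (hcontr : ∀ (t : T) (n : ℕ),
      Metric.diam (F^[n] '' ({t} ×ˢ (univ : Set N))) ≤ C * lam ^ n)
    {t : ℕ → T} {p q : T × N} (hp : ∀ n : ℕ, p ∈ F^[n] '' ({t n} ×ˢ (univ : Set N)))
    (hq : ∀ n : ℕ, q ∈ F^[n] '' ({t n} ×ˢ (univ : Set N))) : p = q :=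
  eq_of_forall_dist_le_mul_pow hlam0.le hlam1 fun n =>
    (Metric.dist_le_diam_of_mem Metric.isBounded_of_compactSpace (hp n) (hq n)).trans
      (hcontr (t n) n)

end FibredMaps

theorem stmt4_general {T N : Type*} [MetricSpace T] [CompactSpace T]
    [MetricSpace N] [CompactSpace N] [Nonempty N]
    (g : T → T)
    (F : T × N → T × N) (hFc : Continuous F) (hFi : Function.Injective F)
    (hfib : ∀ p : T × N, (F p).1 = g p.1)
    (C lam : ℝ) (hlam0 : 0 < lam) (hlam1 : lam < 1)
    (hcontr : ∀ (t : T) (n : ℕ),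
      Metric.diam (F^[n] '' ({t} ×ˢ (Set.univ : Set N))) ≤ C * lam ^ n)
    (S : Set (T × N)) (hS : S = ⋂ l : ℕ, F^[l] '' Set.univ)
    (θ : S → InvLim g)
    (hθ : ∀ (p : S) (i : ℕ),
      (p : T × N) ∈ F^[i] '' ({(θ p).1 i} ×ˢ (Set.univ : Set N))) :
    (∀ p : S, F (p : T × N) ∈ S) ∧
    (∃ e : S ≃ₜ InvLim g, ∀ p : S, e p = θ p) ∧
    (∀ (p : S) (hp : F (p : T × N) ∈ S),
      θ ⟨F (p : T × N), hp⟩ = shiftMap g (θ p)) := by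
  subst hS
  have hθ_eq : ∀ (p : ⋂ l : ℕ, F^[l] '' univ) (t : InvLim g),
      (∀ i : ℕ, (p : T × N) ∈ F^[i] '' ({t.1 i} ×ˢ univ)) → θ p = t := fun p t h =>
    Subtype.ext <| funext fun i => eq_of_mem_image_prod_univ (hFi.iterate i) (hθ p i) (h i)
  refine ⟨fun p => mapsTo_iInter_iterate_image_univ F p.2, ?_,
    fun p hp => hθ_eq _ _ (mem_iterate_image_prod_univ_shiftMap hfib (hθ p))⟩
  have : CompactSpace (⋂ l : ℕ, F^[l] '' univ) :=
    isCompact_iff_compactSpace.mp (isClosed_iInter_iterate_image_univ hFc).isCompact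
  have hcont : Continuous θ := Continuous.subtype_mk (continuous_pi fun i =>
    continuous_of_mem_image_prod_univ ((hFc.iterate i).isClosedEmbedding (hFi.iterate i)).isEmbedding
      continuous_subtype_val fun p => hθ p i) _
  have hinj : Injective θ := fun p q hpq => Subtype.ext <|
    eq_of_forall_mem_iterate_image_prod_univ hlam0 hlam1 hcontr (hθ p) (hpq ▸ hθ q)
  have hsurj : Surjective θ := fun t => by
    obtain ⟨p, hp⟩ := nonempty_iInter_iterate_image_prod_univ hFc hfib t
    have hpS : p ∈ ⋂ l : ℕ, F^[l] '' univ := iInter_mono (fun n => image_mono (subset_univ _)) hp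
    exact ⟨⟨p, hpS⟩, hθ_eq _ _ (mem_iInter.mp hp)⟩
  exact ⟨hcont.homeoOfEquivCompactToT2 (f := Equiv.ofBijective θ ⟨hinj, hsurj⟩), fun _ => rfl⟩

/-- F restricted to S is topologically conjugate to the inverse
limit of g: θ : S → Π_g is a homeomorphism and θ ∘ (F|_S) = ĝ ∘ θ. -/
theorem stmt4 {T N : Type*} [MetricSpace T] [CompactSpace T] [Nonempty T]
    [MetricSpace N] [CompactSpace N] [Nonempty N]
    (g : T → T) (hgc : Continuous g) (hgs : Function.Surjective g)
    (hgcov : IsCoveringMap g)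
    (F : T × N → T × N) (hFc : Continuous F) (hFi : Function.Injective F)
    (hfib : ∀ p : T × N, (F p).1 = g p.1)
    (C lam : ℝ) (hC : 0 < C) (hlam0 : 0 < lam) (hlam1 : lam < 1)
    (hcontr : ∀ (t : T) (n : ℕ),
      Metric.diam (F^[n] '' ({t} ×ˢ (Set.univ : Set N))) ≤ C * lam ^ n)
    (S : Set (T × N)) (hS : S = ⋂ l : ℕ, F^[l] '' Set.univ)
    (θ : S → InvLim g)
    (hθ : ∀ (p : S) (i : ℕ),
      (p : T × N) ∈ F^[i] '' ({(θ p).1 i} ×ˢ (Set.univ : Set N))) :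
    (∀ p : S, F (p : T × N) ∈ S) ∧
    (∃ e : S ≃ₜ InvLim g, ∀ p : S, e p = θ p) ∧
    (∀ (p : S) (hp : F (p : T × N) ∈ S),
      θ ⟨F (p : T × N), hp⟩ = shiftMap g (θ p)) :=
  stmt4_general g F hFc hFi hfib C lam hlam0 hlam1 hcontr S hS θ hθ
end

section
/- Let T be a compact metric space and g : T → T a continuous surjective map. Let t̄ = (t_0, t_1, …) ∈ Π_g be a sequence with g(t_{i+1}) = t_i for all i ≥ 0, and suppose t_i ∈ NW(g) for all i ≥ 0. Then t̄ is a non-wandering point of the shift map ĝ : Π_g → Π_g. -/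
/-!
A basic neighbourhood of `t̄` in `Π_g` only constrains finitely many coordinates, and since
`t_i = g^[N - i] t_N` for `i ≤ N`, it contains the set of all `s̄` with `s_N` in some
neighbourhood `Z` of `t_N`. As `t_N` is non-wandering, some `x ∈ Z` has `g^[n] x ∈ Z`;
by surjectivity `x` is the `N`-th coordinate of some `s̄ ∈ Π_g`, and then `s̄` and `ĝ^[n] s̄`
both lie in the neighbourhood, because the shift acts on each coordinate as `g`.
-/

open Filter Topology

namespace InvLim

variable {T : Type*} {g : T → T}

theorem exists_coord_eq (hgs : Function.Surjective g) (N : ℕ) (x : T) :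
    ∃ s : InvLim g, s.1 N = x := by
  obtain ⟨r, hr⟩ := hgs.hasRightInverse
  -- truncated subtraction: this is `g^[N - i] x` for `i ≤ N` and `r^[i - N] x` for `i ≥ N`
  refine ⟨⟨fun i => g^[N - i] (r^[i - N] x), fun i => ?_⟩, by simp⟩
  dsimp only
  rcases Nat.lt_or_ge i N with hi | hi
  · rw [Nat.sub_eq_zero_of_le hi, Nat.sub_eq_zero_of_le hi.le, ← Function.iterate_succ_apply' g]
    congr 2
    omega
  · rw [Nat.sub_eq_zero_of_le (by omega : N ≤ i + 1), Nat.sub_eq_zero_of_le hi,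
      show i + 1 - N = i - N + 1 by omega, Function.iterate_succ_apply']
    exact hr _

theorem shiftMap_coord (s : InvLim g) (N : ℕ) : (shiftMap g s).1 N = g (s.1 N) := by
  cases N with
  | zero => rfl
  | succ j => exact (s.2 j).symm

theorem shiftMap_iterate_coord (s : InvLim g) (n N : ℕ) :
    ((shiftMap g)^[n] s).1 N = g^[n] (s.1 N) := by
  induction n with
  | zero => rfl
  | succ n ih => rw [Function.iterate_succ_apply', Function.iterate_succ_apply', shiftMap_coord, ih]

variable [TopologicalSpace T]

theorem exists_coord_preimage_subset_of_mem_nhds (hgc : Continuous g) {t : InvLim g}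
    {U : Set (InvLim g)} (hU : U ∈ 𝓝 t) :
    ∃ N, ∃ Z ∈ 𝓝 (t.1 N), (fun u : InvLim g => u.1 N) ⁻¹' Z ⊆ U := by
  have hnhds : 𝓝 t = ⨅ N, comap (fun u : InvLim g => u.1 N) (𝓝 (t.1 N)) := by
    refine (IsInducing.subtypeVal.nhds_eq_comap t).trans ?_
    rw [nhds_pi, Filter.pi, comap_iInf]
    simp only [comap_comap]
    rfl
  have hanti : Antitone fun N => comap (fun u : InvLim g => u.1 N) (𝓝 (t.1 N)) := by
    refine antitone_nat_of_succ_le fun N => ?_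
    have hcoord : (fun u : InvLim g => u.1 N) = g ∘ fun u : InvLim g => u.1 (N + 1) :=
      funext fun u => (u.2 N).symm
    rw [hcoord, ← comap_comap, ← t.2 N]
    exact comap_mono hgc.continuousAt.le_comap
  rw [hnhds, mem_iInf_of_directed hanti.directed_ge] at hU
  obtain ⟨N, hN⟩ := hU
  exact ⟨N, mem_comap.1 hN⟩

end InvLim

theorem stmt5_general {T : Type*} [MetricSpace T]
    (g : T → T) (hgc : Continuous g) (hgs : Function.Surjective g)
    (tbar : InvLim g) (h : ∀ i : ℕ, NonWandering g (tbar.1 i)) :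
    NonWandering (shiftMap g) tbar := by
  intro U hU
  obtain ⟨N, Z, hZ, hZU⟩ := InvLim.exists_coord_preimage_subset_of_mem_nhds hgc hU
  obtain ⟨n, hn, _, ⟨x, hxZ, rfl⟩, hgxZ⟩ := h N Z hZ
  obtain ⟨s, rfl⟩ := InvLim.exists_coord_eq hgs N x
  refine ⟨n, hn, _, ⟨s, hZU hxZ, rfl⟩, hZU ?_⟩
  rwa [Set.mem_preimage, InvLim.shiftMap_iterate_coord]

/-- if t̄ = (t_0, t_1, …) ∈ Π_g has every t_i non-wandering for g,
then t̄ is non-wandering for the shift map ĝ. -/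
theorem stmt5 {T : Type*} [MetricSpace T] [CompactSpace T]
    (g : T → T) (hgc : Continuous g) (hgs : Function.Surjective g)
    (tbar : InvLim g) (h : ∀ i : ℕ, NonWandering g (tbar.1 i)) :
    NonWandering (shiftMap g) tbar :=
  stmt5_general g hgc hgs tbar h
end

section
/- Assume in addition that g(NW(g)) = NW(g). Then p₁(NW(F)) = NW(g), where NW(F) is the non-wandering set of F : T × N → T × N. -/
/-!
Points of `NW(F)` project to `NW(g)` because `p₁` semiconjugates `F` to `g`. Conversely, since
`NW(g) ⊆ g(NW(g))`, a point `t ∈ NW(g)` has a backward orbit `t = x₀ ← x₁ ← ⋯` inside `NW(g)`. The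
compact sets `F^m({x_m} × N)` are nested, lie over `t`, and their diameters tend to `0`, so they
shrink to a single point `p` over `t`. Any neighbourhood `U` of `p` contains some `F^m({x_m} × N)`,
hence, by compactness of `N`, also `F^m(V × N)` for a neighbourhood `V` of `x_m`; a return of `g`
to `V` then lifts, through `F^m`, to a return of `F` to `U`.
-/

open Set Filter Topology Function Metric

theorem NonWandering.map_of_semiconj {X Y : Type*} [TopologicalSpace X] [TopologicalSpace Y]
    {f : X → X} {g : Y → Y} {π : X → Y} (h : Semiconj π f g) {x : X} (hπ : ContinuousAt π x)
    (hx : NonWandering f x) : NonWandering g (π x) := by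
  intro U hU
  obtain ⟨n, hn, _, ⟨y, hy, rfl⟩, hyU⟩ := hx _ (hπ.preimage_mem_nhds hU)
  exact ⟨n, hn, π (f^[n] y), ⟨π y, hy, (h.iterate_right n y).symm⟩, hyU⟩

theorem exists_backward_orbit {X : Type*} {g : X → X} {S : Set X} (hS : S ⊆ g '' S) {t : X}
    (ht : t ∈ S) : ∃ x : ℕ → X, x 0 = t ∧ (∀ k, x k ∈ S) ∧ ∀ k, g (x (k + 1)) = x k := by
  have hpre : ∀ y : S, ∃ z : S, g z = y := fun ⟨y, hy⟩ =>
    let ⟨z, hz, hzy⟩ := hS hy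
    ⟨⟨z, hz⟩, hzy⟩
  choose f hf using hpre
  refine ⟨fun k => (f^[k] ⟨t, ht⟩ : X), rfl, fun k => (f^[k] ⟨t, ht⟩).2, fun k => ?_⟩
  simp only [iterate_succ_apply', hf]

theorem exists_subset_of_tendsto_diam {X : Type*} [PseudoMetricSpace X] {A : ℕ → Set X} {p : X}
    (hp : ∀ m, p ∈ A m) (hA : ∀ m, Bornology.IsBounded (A m))
    (hdiam : Tendsto (fun m => diam (A m)) atTop (𝓝 0)) : ∀ U ∈ 𝓝 p, ∃ m, A m ⊆ U := by
  intro U hU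
  obtain ⟨ε, hε, hball⟩ := Metric.mem_nhds_iff.mp hU
  obtain ⟨m, hm⟩ := (hdiam.eventually (gt_mem_nhds hε)).exists
  exact ⟨m, fun y hy => hball <| mem_ball.mpr <|
    (dist_le_diam_of_mem (hA m) hy (hp m)).trans_lt hm⟩

theorem Function.Semiconj.image_singleton_prod_univ_subset {X Y : Type*} {F : X × Y → X × Y}
    {g : X → X} (hF : Semiconj Prod.fst F g) (s : X) :
    F '' ({s} ×ˢ (univ : Set Y)) ⊆ {g s} ×ˢ univ := by
  rintro _ ⟨q, ⟨hq, -⟩, rfl⟩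
  exact ⟨by rw [mem_singleton_iff, hF q, mem_singleton_iff.mp hq], trivial⟩

theorem nonWandering_of_forall_mem_nhds {X Y : Type*} [TopologicalSpace X] [TopologicalSpace Y]
    [CompactSpace Y] [Nonempty Y] {F : X × Y → X × Y} {g : X → X} (hFc : Continuous F)
    (hF : Semiconj Prod.fst F g) {p : X × Y}
    (h : ∀ U ∈ 𝓝 p, ∃ m s, NonWandering g s ∧ ∀ y, F^[m] (s, y) ∈ U) : NonWandering F p := by
  intro U hU
  obtain ⟨m, s, hs, hsU⟩ := h (interior U) (interior_mem_nhds.mpr hU)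
  have htube : ∀ᶠ s' in 𝓝 s, ∀ y ∈ (univ : Set Y), F^[m] (s', y) ∈ interior U :=
    isCompact_univ.eventually_forall_of_forall_eventually fun y _ =>
      (hFc.iterate m).continuousAt.preimage_mem_nhds (isOpen_interior.mem_nhds (hsU y))
  obtain ⟨n, hn, _, ⟨s', hs', rfl⟩, hreturn⟩ := hs _ htube
  obtain ⟨y⟩ := ‹Nonempty Y›
  have hFn : F^[n] (s', y) = (g^[n] s', (F^[n] (s', y)).2) :=
    Prod.ext (hF.iterate_right n (s', y)) rfl
  refine ⟨n, hn, F^[m] (F^[n] (s', y)),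
    ⟨F^[m] (s', y), interior_subset (hs' y trivial), (Commute.iterate_iterate_self F m n _).symm⟩,
    interior_subset ?_⟩
  rw [hFn]
  exact hreturn _ trivial

theorem exists_nonWandering_fst_eq {T N : Type*} [MetricSpace T] [MetricSpace N] [CompactSpace N]
    [Nonempty N] {F : T × N → T × N} {g : T → T} (hFc : Continuous F)
    (hF : Semiconj Prod.fst F g) {x : ℕ → T} (hx : ∀ k, NonWandering g (x k))
    (hxg : ∀ k, g (x (k + 1)) = x k)
    (hdiam : Tendsto (fun m => diam (F^[m] '' ({x m} ×ˢ (univ : Set N)))) atTop (𝓝 0)) :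
    ∃ p : T × N, p.1 = x 0 ∧ NonWandering F p := by
  set A : ℕ → Set (T × N) := fun m => F^[m] '' ({x m} ×ˢ univ)
  have hcpt : ∀ m, IsCompact (A m) := fun m =>
    (isCompact_singleton.prod isCompact_univ).image (hFc.iterate m)
  have hanti : ∀ m, A (m + 1) ⊆ A m := fun m => by
    simp only [A, iterate_succ, image_comp]
    exact image_mono (hxg m ▸ hF.image_singleton_prod_univ_subset _)
  obtain ⟨p, hp⟩ := IsCompact.nonempty_iInter_of_sequence_nonempty_isCompact_isClosed A hanti
    (fun m => ((singleton_nonempty _).prod univ_nonempty).image _) (hcpt 0)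
    (fun m => (hcpt m).isClosed)
  have hpA : ∀ m, p ∈ A m := mem_iInter.mp hp
  have hshrink := exists_subset_of_tendsto_diam hpA (fun m => (hcpt m).isBounded) hdiam
  refine ⟨p, ?_, nonWandering_of_forall_mem_nhds hFc hF fun U hU => ?_⟩
  · obtain ⟨_, ⟨hq, -⟩, rfl⟩ := hpA 0
    exact hq
  · obtain ⟨m, hm⟩ := hshrink U hU
    exact ⟨m, x m, hx m, fun y => hm ⟨(x m, y), ⟨rfl, trivial⟩, rfl⟩⟩

theorem stmt6_general {T N : Type*} [MetricSpace T]
    [MetricSpace N] [CompactSpace N] [Nonempty N]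
    (g : T → T)
    (F : T × N → T × N) (hFc : Continuous F)
    (hfib : ∀ p : T × N, (F p).1 = g p.1)
    (C lam : ℝ) (hlam0 : 0 < lam) (hlam1 : lam < 1)
    (hcontr : ∀ (t : T) (n : ℕ),
      Metric.diam (F^[n] '' ({t} ×ˢ (Set.univ : Set N))) ≤ C * lam ^ n)
    (hNWinv : g '' {t | NonWandering g t} = {t | NonWandering g t}) :
    Prod.fst '' {p : T × N | NonWandering F p} = {t | NonWandering g t} := by
  have hF : Semiconj Prod.fst F g := hfib
  ext t
  constructor
  · rintro ⟨p, hp, rfl⟩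
    exact hp.map_of_semiconj hF continuous_fst.continuousAt
  · intro ht
    obtain ⟨x, rfl, hxNW, hxg⟩ := exists_backward_orbit hNWinv.superset ht
    have hbound : Tendsto (fun m => C * lam ^ m) atTop (𝓝 0) := by
      simpa using (tendsto_pow_atTop_nhds_zero_of_lt_one hlam0.le hlam1).const_mul C
    obtain ⟨p, hp0, hp⟩ := exists_nonWandering_fst_eq hFc hF hxNW hxg
      (squeeze_zero (fun _ => diam_nonneg) (fun m => hcontr (x m) m) hbound)
    exact ⟨p, hp, hp0⟩

/-- if moreover g(NW(g)) = NW(g), then p₁(NW(F)) = NW(g). -/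
theorem stmt6 {T N : Type*} [MetricSpace T] [CompactSpace T] [Nonempty T]
    [MetricSpace N] [CompactSpace N] [Nonempty N]
    (g : T → T) (hgc : Continuous g) (hgs : Function.Surjective g)
    (hgcov : IsCoveringMap g)
    (F : T × N → T × N) (hFc : Continuous F) (hFi : Function.Injective F)
    (hfib : ∀ p : T × N, (F p).1 = g p.1)
    (C lam : ℝ) (hC : 0 < C) (hlam0 : 0 < lam) (hlam1 : lam < 1)
    (hcontr : ∀ (t : T) (n : ℕ),
      Metric.diam (F^[n] '' ({t} ×ˢ (Set.univ : Set N))) ≤ C * lam ^ n)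
    (hNWinv : g '' {t | NonWandering g t} = {t | NonWandering g t}) :
    Prod.fst '' {p : T × N | NonWandering F p} = {t | NonWandering g t} :=
  stmt6_general g F hFc hfib C lam hlam0 hlam1 hcontr hNWinv
end

section
/- Let p = (t_0, z_0) ∈ S be a non-wandering point of F, and let θ(p) = (t_0, t_1, t_2, …) be its itinerary sequence. Then t_i ∈ NW(g) for all i ≥ 0. -/
/-!
Write `p = F^i r` with `r` in the fibre over `tᵢ`, and let `U` be a neighbourhood of `tᵢ`. Since
`gⁱ` is open, every `q` close to `p` has `q.1 = gⁱ u` for some `u ∈ U`, and `F^i (u, q.2)` lies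
in the fibre of `q`. If `q` returns close to `p` at a large time `n`, fibre contraction keeps
`Fⁿ (F^i (u, q.2)) = F^i (Fⁿ (u, q.2))` close to `p` as well. As `F^i` is a closed embedding
(`T × N` is compact), `Fⁿ (u, q.2)` is then close to `r`, so `gⁿ u = (Fⁿ (u, q.2)).1 ∈ U`.
-/

open Set Filter Topology Function

theorem IsOpenMap.iterate {X : Type*} [TopologicalSpace X] {h : X → X} (hh : IsOpenMap h) :
    ∀ n : ℕ, IsOpenMap h^[n]
  | 0 => IsOpenMap.id
  | n + 1 => (hh.iterate n).comp hh

theorem exists_mem_nhds_disjoint_image {X : Type*} [TopologicalSpace X] [T2Space X]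
    {h : X → X} (hh : Continuous h) {x : X} (hx : h x ≠ x) :
    ∃ V ∈ 𝓝 x, Disjoint (h '' V) V := by
  obtain ⟨u, v, hu, hv, hxu, hxv, huv⟩ := t2_separation hx
  refine ⟨v ∩ h ⁻¹' u, inter_mem (hv.mem_nhds hxv) (hh.continuousAt.preimage_mem_nhds
    (hu.mem_nhds hxu)), ?_⟩
  exact huv.mono (image_subset_iff.2 inter_subset_right) inter_subset_left

theorem NonWandering.frequently_atTop {X : Type*} [TopologicalSpace X] [T2Space X]
    {h : X → X} (hh : Continuous h) {x : X} (hx : NonWandering h x) {U : Set X}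
    (hU : U ∈ 𝓝 x) : ∃ᶠ n in atTop, (h^[n] '' U ∩ U).Nonempty := by
  rw [Filter.frequently_atTop]
  by_cases hper : ∃ d ≥ 1, h^[d] x = x
  · obtain ⟨d, hd, hdx⟩ := hper
    have hxU : x ∈ U := mem_of_mem_nhds hU
    intro m
    refine ⟨d * m, Nat.le_mul_of_pos_left m hd, x, ⟨x, hxU, ?_⟩, hxU⟩
    rw [iterate_mul]
    exact iterate_fixed hdx m
  -- Without periodicity, small neighbourhoods of `x` do not return at time `m + 1`, so the
  -- return times can be pushed past every bound.
  push Not at hper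
  suffices ∀ m, ∀ U ∈ 𝓝 x, ∃ n ≥ m + 1, (h^[n] '' U ∩ U).Nonempty from
    fun m => (this m U hU).imp fun n ⟨hn, hne⟩ => ⟨by omega, hne⟩
  intro m
  induction m with
  | zero => exact hx
  | succ m ih =>
    intro U hU
    obtain ⟨V, hV, hdisj⟩ :=
      exists_mem_nhds_disjoint_image (hh.iterate (m + 1)) (hper (m + 1) (by omega))
    obtain ⟨n, hn, hne⟩ := ih (U ∩ V) (inter_mem hU hV)
    have hnm : n ≠ m + 1 := by
      rintro rfl
      exact (hne.mono (inter_subset_inter (image_mono inter_subset_right)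
        inter_subset_right)).ne_empty hdisj.inter_eq
    exact ⟨n, by omega,
      hne.mono (inter_subset_inter (image_mono inter_subset_left) inter_subset_left)⟩

section FiberContraction

variable {T N : Type*} [MetricSpace T] [MetricSpace N] {F : T × N → T × N}

theorem eventually_dist_iterate_lt_of_diam_le [CompactSpace N] (hFc : Continuous F)
    {C lam : ℝ} (hlam0 : 0 ≤ lam) (hlam1 : lam < 1)
    (hcontr : ∀ (t : T) (n : ℕ),
      Metric.diam (F^[n] '' ({t} ×ˢ (univ : Set N))) ≤ C * lam ^ n)
    {ε : ℝ} (hε : 0 < ε) :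
    ∀ᶠ n in atTop, ∀ x y : T × N, x.1 = y.1 → dist (F^[n] x) (F^[n] y) < ε := by
  have hlim : Tendsto (fun n => C * lam ^ n) atTop (𝓝 0) := by
    simpa using (tendsto_pow_atTop_nhds_zero_of_lt_one hlam0 hlam1).const_mul C
  filter_upwards [hlim.eventually (gt_mem_nhds hε)] with n hn x y hxy
  have hbdd : Bornology.IsBounded (F^[n] '' ({x.1} ×ˢ (univ : Set N))) :=
    ((isCompact_singleton.prod isCompact_univ).image (hFc.iterate n)).isBounded
  calc dist (F^[n] x) (F^[n] y)
      ≤ Metric.diam (F^[n] '' ({x.1} ×ˢ (univ : Set N))) :=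
        Metric.dist_le_diam_of_mem hbdd (mem_image_of_mem _ ⟨rfl, trivial⟩)
          (mem_image_of_mem _ ⟨hxy.symm, trivial⟩)
    _ ≤ C * lam ^ n := hcontr _ _
    _ < ε := hn

theorem NonWandering.of_mem_image_iterate_fiber [CompactSpace T] [CompactSpace N] {g : T → T}
    (hg : IsOpenMap g) (hFc : Continuous F) (hFi : Injective F) (hfib : Semiconj Prod.fst F g)
    (hcontr : ∀ ε > 0, ∀ᶠ n in atTop,
      ∀ x y : T × N, x.1 = y.1 → dist (F^[n] x) (F^[n] y) < ε)
    {p : T × N} (hp : NonWandering F p) {τ : T} {i : ℕ}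
    (hpi : p ∈ F^[i] '' ({τ} ×ˢ (univ : Set N))) : NonWandering g τ := by
  intro U hU
  obtain ⟨r, ⟨(rfl : r.1 = τ), -⟩, rfl⟩ := hpi
  obtain ⟨W, hW, hWU⟩ : ∃ W ∈ 𝓝 (F^[i] r), F^[i] ⁻¹' W ⊆ Prod.fst ⁻¹' U := by
    rw [← mem_comap,
      ← ((hFc.iterate i).isClosedEmbedding (hFi.iterate i)).isInducing.nhds_eq_comap]
    exact continuous_fst.continuousAt.preimage_mem_nhds hU
  obtain ⟨δ, hδ, hδW⟩ := Metric.mem_nhds_iff.1 hW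
  have hlift : Prod.fst ⁻¹' (g^[i] '' U) ∈ 𝓝 (F^[i] r) := by
    apply continuous_fst.continuousAt.preimage_mem_nhds
    rw [hfib.iterate_right i r]
    exact (hg.iterate i).image_mem_nhds hU
  have hV : Metric.ball (F^[i] r) (δ / 2) ∩ Prod.fst ⁻¹' (g^[i] '' U) ∈ 𝓝 (F^[i] r) :=
    inter_mem (Metric.ball_mem_nhds _ (half_pos hδ)) hlift
  obtain ⟨n, ⟨-, ⟨q, hq, rfl⟩, hqn⟩, hclose, hn⟩ := ((hp.frequently_atTop hFc hV).and_eventually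
    ((hcontr (δ / 2) (half_pos hδ)).and (eventually_ge_atTop 1))).exists
  obtain ⟨u, hu, hqu⟩ := hq.2
  have hdist : dist (F^[i] (F^[n] (u, q.2))) (F^[i] r) < δ :=
    calc dist (F^[i] (F^[n] (u, q.2))) (F^[i] r)
        = dist (F^[n] (F^[i] (u, q.2))) (F^[i] r) := by
          rw [← iterate_add_apply, add_comm, iterate_add_apply]
      _ ≤ dist (F^[n] (F^[i] (u, q.2))) (F^[n] q) + dist (F^[n] q) (F^[i] r) := dist_triangle ..
      _ < δ / 2 + δ / 2 := add_lt_add (hclose _ _ (by rw [hfib.iterate_right i]; exact hqu)) hqn.1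
      _ = δ := add_halves δ
  refine ⟨n, hn, g^[n] u, mem_image_of_mem _ hu, ?_⟩
  rw [← hfib.iterate_right n (u, q.2)]
  exact hWU (hδW hdist)

end FiberContraction

theorem stmt7_general {T N : Type*} [MetricSpace T] [CompactSpace T]
    [MetricSpace N] [CompactSpace N]
    (g : T → T)
    (hgcov : IsCoveringMap g)
    (F : T × N → T × N) (hFc : Continuous F) (hFi : Function.Injective F)
    (hfib : ∀ p : T × N, (F p).1 = g p.1)
    (C lam : ℝ) (hlam0 : 0 < lam) (hlam1 : lam < 1)
    (hcontr : ∀ (t : T) (n : ℕ),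
      Metric.diam (F^[n] '' ({t} ×ˢ (Set.univ : Set N))) ≤ C * lam ^ n)
    (p : T × N) (hpNW : NonWandering F p)
    (t : ℕ → T)
    (hitin : ∀ i : ℕ, p ∈ F^[i] '' ({t i} ×ˢ (Set.univ : Set N))) :
    ∀ i : ℕ, NonWandering g (t i) := fun i =>
  hpNW.of_mem_image_iterate_fiber hgcov.isOpenMap hFc hFi hfib
    (fun _ hε => eventually_dist_iterate_lt_of_diam_le hFc hlam0.le hlam1 hcontr hε) (hitin i)

/-- if p = (t_0, z_0) ∈ S is a non-wandering point of F with
itinerary sequence θ(p) = (t_0, t_1, …), then t_i ∈ NW(g) for all i. -/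
theorem stmt7 {T N : Type*} [MetricSpace T] [CompactSpace T] [Nonempty T]
    [MetricSpace N] [CompactSpace N] [Nonempty N]
    (g : T → T) (hgc : Continuous g) (hgs : Function.Surjective g)
    (hgcov : IsCoveringMap g)
    (F : T × N → T × N) (hFc : Continuous F) (hFi : Function.Injective F)
    (hfib : ∀ p : T × N, (F p).1 = g p.1)
    (C lam : ℝ) (hC : 0 < C) (hlam0 : 0 < lam) (hlam1 : lam < 1)
    (hcontr : ∀ (t : T) (n : ℕ),
      Metric.diam (F^[n] '' ({t} ×ˢ (Set.univ : Set N))) ≤ C * lam ^ n)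
    (S : Set (T × N)) (hS : S = ⋂ l : ℕ, F^[l] '' Set.univ)
    (p : T × N) (hpS : p ∈ S) (hpNW : NonWandering F p)
    (t : ℕ → T) (ht0 : t 0 = p.1)
    (htg : ∀ i : ℕ, g (t (i + 1)) = t i)
    (hitin : ∀ i : ℕ, p ∈ F^[i] '' ({t i} ×ˢ (Set.univ : Set N))) :
    ∀ i : ℕ, NonWandering g (t i) :=
  stmt7_general g hgcov F hFc hFi hfib C lam hlam0 hlam1 hcontr p hpNW t hitin
end

section
/- Let Ω ⊆ T be a set satisfying Ω = NW(g) ∩ g^{-1}(Ω). If p = (t_0, z_0) ∈ S is a non-wandering point of F with t_0 ∈ Ω, and θ(p) = (t_0, t_1, t_2, …) is its itinerary sequence, then t_i ∈ Ω for all i ≥ 0. -/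
/-- A non-wandering point has arbitrarily large return times. -/
lemma nonWandering_large_times {X : Type*} [TopologicalSpace X] [T2Space X]
    (h : X → X) (hc : Continuous h) (x : X) (hx : NonWandering h x) :
    ∀ U ∈ nhds x, ∀ M : ℕ, ∃ n : ℕ, M ≤ n ∧ 1 ≤ n ∧ (h^[n] '' U ∩ U).Nonempty := by
  intro U hU M
  by_cases hper : ∃ m, 1 ≤ m ∧ h^[m] x = x
  · obtain ⟨m, hm1, hmx⟩ := hper
    refine ⟨m * (M + 1), ?_, ?_, ?_⟩
    · calc M ≤ M + 1 := by omega
        _ ≤ m * (M + 1) := Nat.le_mul_of_pos_left _ hm1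
    · exact le_trans hm1 (Nat.le_mul_of_pos_right _ (by omega))
    · have hfix : h^[m * (M + 1)] x = x := by
        rw [Function.iterate_mul]
        exact Function.iterate_fixed hmx (M + 1)
      have hxU : x ∈ U := mem_of_mem_nhds hU
      exact ⟨x, ⟨x, hxU, hfix⟩, hxU⟩
  · push_neg at hper
    have hsep : ∀ n : ℕ, ∃ Vn ∈ nhds x, (1 ≤ n → (h^[n] '' Vn ∩ Vn) = ∅) := by
      intro n
      by_cases hn : 1 ≤ n
      · have hne : h^[n] x ≠ x := hper n hn
        obtain ⟨u, v, hu, hv, hxu, hhv, huv⟩ := t2_separation hne.symm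
        refine ⟨u ∩ h^[n] ⁻¹' v, ?_, fun _ => ?_⟩
        · exact (hu.inter ((hc.iterate n).isOpen_preimage v hv)).mem_nhds
            ⟨hxu, Set.mem_preimage.mpr hhv⟩
        · apply Set.eq_empty_iff_forall_notMem.mpr
          rintro z ⟨⟨w, hw, rfl⟩, hz⟩
          exact Set.disjoint_left.mp huv hz.1 hw.2
      · exact ⟨Set.univ, Filter.univ_mem, fun h1 => absurd h1 hn⟩
    choose V hVmem hVemp using hsep
    have hU' : U ∩ ⋂ n ∈ Finset.Icc 1 M, V n ∈ nhds x :=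
      Filter.inter_mem hU ((Filter.biInter_finset_mem _).mpr fun n _ => hVmem n)
    obtain ⟨n, hn1, z, ⟨y, hy, hyz⟩, hz⟩ := hx _ hU'
    have hnM : M < n := by
      by_contra hle
      push_neg at hle
      have hnIcc : n ∈ Finset.Icc 1 M := Finset.mem_Icc.mpr ⟨hn1, hle⟩
      have hyV : y ∈ V n := by
        have := hy.2
        simp only [Set.mem_iInter] at this
        exact this n hnIcc
      have hzV : z ∈ V n := by
        have := hz.2
        simp only [Set.mem_iInter] at this
        exact this n hnIcc
      have : z ∈ h^[n] '' V n ∩ V n := ⟨⟨y, hyV, hyz⟩, hzV⟩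
      rw [hVemp n hn1] at this
      exact this
    exact ⟨n, le_of_lt hnM, hn1, ⟨z, ⟨y, hy.1, hyz⟩, hz.1⟩⟩

/-- let Ω ⊆ T satisfy Ω = NW(g) ∩ g⁻¹(Ω).  If p = (t_0, z_0) ∈ S is a
non-wandering point of F with t_0 ∈ Ω and itinerary θ(p) = (t_0, t_1, …), then
t_i ∈ Ω for all i. -/
theorem stmt8 {T N : Type*} [MetricSpace T] [CompactSpace T] [Nonempty T]
    [MetricSpace N] [CompactSpace N] [Nonempty N]
    (g : T → T) (hgc : Continuous g) (hgs : Function.Surjective g)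
    (hgcov : IsCoveringMap g)
    (F : T × N → T × N) (hFc : Continuous F) (hFi : Function.Injective F)
    (hfib : ∀ p : T × N, (F p).1 = g p.1)
    (C lam : ℝ) (hC : 0 < C) (hlam0 : 0 < lam) (hlam1 : lam < 1)
    (hcontr : ∀ (t : T) (n : ℕ),
      Metric.diam (F^[n] '' ({t} ×ˢ (Set.univ : Set N))) ≤ C * lam ^ n)
    (S : Set (T × N)) (hS : S = ⋂ l : ℕ, F^[l] '' Set.univ)
    (Ω : Set T) (hΩ : Ω = {x | NonWandering g x} ∩ g ⁻¹' Ω)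
    (p : T × N) (hpS : p ∈ S) (hpNW : NonWandering F p)
    (t : ℕ → T) (ht0 : t 0 = p.1) (ht0Ω : t 0 ∈ Ω)
    (htg : ∀ i : ℕ, g (t (i + 1)) = t i)
    (hitin : ∀ i : ℕ, p ∈ F^[i] '' ({t i} ×ˢ (Set.univ : Set N))) :
    ∀ i : ℕ, t i ∈ Ω := by
  -- first coordinate of iterates of F
  have hfst : ∀ (m : ℕ) (x : T × N), (F^[m] x).1 = g^[m] x.1 := by
    intro m
    induction m with
    | zero => intro x; rfl
    | succ m ih =>
      intro x
      rw [Function.iterate_succ_apply, Function.iterate_succ_apply, ih, hfib]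
  -- g^[j] (t j) = t 0
  have hgt : ∀ j : ℕ, g^[j] (t j) = t 0 := by
    intro j
    induction j with
    | zero => rfl
    | succ j ih => rw [Function.iterate_succ_apply, htg, ih]
  -- g^[k] is an open map
  have hgopen : ∀ k : ℕ, IsOpenMap (g^[k]) := by
    intro k
    induction k with
    | zero => exact IsOpenMap.id
    | succ k ih =>
      rw [Function.iterate_succ]
      exact ih.comp hgcov.isOpenMap
  -- the key claim : each t k (k ≥ 1) is non-wandering for g
  have key : ∀ k : ℕ, 1 ≤ k → NonWandering g (t k) := by
    intro k hk V' hV'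
    obtain ⟨q, hqmem, hqp⟩ := hitin k
    have hq1 : q.1 = t k := hqmem.1
    obtain ⟨V, hVsub, hVopen, htkV⟩ := mem_nhds_iff.mp hV'
    set A : Set (T × N) := Prod.fst ⁻¹' Vᶜ with hA
    have hAclosed : IsClosed A := (hVopen.isClosed_compl).preimage continuous_fst
    have hKA : IsCompact (F^[k] '' A) := hAclosed.isCompact.image (hFc.iterate k)
    have hpA : p ∉ F^[k] '' A := by
      rintro ⟨a, haA, hae⟩
      have : a = q := Function.Injective.iterate hFi k (hae.trans hqp.symm)
      rw [this] at haA
      exact haA (hq1 ▸ htkV)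
    set W : Set T := g^[k] '' V with hW
    have hWopen : IsOpen W := hgopen k V hVopen
    have ht0W : t 0 ∈ W := ⟨t k, htkV, hgt k⟩
    set O : Set (T × N) := (F^[k] '' A)ᶜ ∩ (Prod.fst ⁻¹' W) with hO
    have hOnhds : O ∈ nhds p := by
      have hOopen : IsOpen O :=
        (hKA.isClosed.isOpen_compl).inter (hWopen.preimage continuous_fst)
      exact hOopen.mem_nhds ⟨hpA, show p.1 ∈ W from ht0 ▸ ht0W⟩
    obtain ⟨n, hkn, hn1, z, ⟨y, hyO, hyz⟩, hzO⟩ :=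
      nonWandering_large_times F hFc p hpNW O hOnhds k
    -- z = F^[n] y ∈ O, so F^[n-k] y has first coordinate in V
    have hsplit : F^[n] y = F^[k] (F^[n - k] y) := by
      rw [← Function.iterate_add_apply]
      congr 1
      omega
    have hz1 : z ∉ F^[k] '' A := hzO.1
    have hnkA : F^[n - k] y ∉ A := fun hmem => hz1 ⟨F^[n - k] y, hmem, (hyz ▸ hsplit.symm)⟩
    have hnkV : g^[n - k] y.1 ∈ V := by
      have : (F^[n - k] y).1 ∈ V := by
        by_contra hcon
        exact hnkA hcon
      rwa [hfst] at this
    -- y.1 ∈ W, lift it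
    obtain ⟨s, hsV, hs⟩ : y.1 ∈ W := hyO.2
    have hgn : g^[n] s ∈ V := by
      have : g^[n - k + k] s = g^[n - k] (g^[k] s) := Function.iterate_add_apply g _ _ s
      rw [hs] at this
      have hnk : n - k + k = n := by omega
      rw [hnk] at this
      rw [this]
      exact hnkV
    exact ⟨n, hn1, ⟨g^[n] s, ⟨s, hVsub hsV, rfl⟩, hVsub hgn⟩⟩
  intro i
  induction i with
  | zero => exact ht0Ω
  | succ i ih =>
    rw [hΩ]
    refine ⟨key (i + 1) (by omega), ?_⟩
    show g (t (i + 1)) ∈ Ω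
    rw [htg i]
    exact ih
end

section
/- Let T be a compact metric space, g : T → T a continuous surjective map, and Ω ⊆ T a nonempty compact set with g(Ω) = Ω and with no isolated points, such that there exists x₀ ∈ Ω whose forward orbit {g^n(x₀) : n ≥ 0} is dense in Ω. Then for every t̄ = (t_0, t_1, …) ∈ Π_g with t_i ∈ Ω for all i ≥ 0, there exists x̄ = (x_0, x_1, …) ∈ Π_g with x_i ∈ Ω for all i ≥ 0 such that t̄ belongs to the ω-limit set of x̄ under the shift map ĝ, i.e., there is a strictly increasing sequence of natural numbers n_k with ĝ^{n_k}(x̄) → t̄ in Π_g. -/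
/-!
Take for x̄ a backward orbit of x₀ inside Ω. Since Ω has no isolated points, removing finitely
many points of the orbit of x₀ does not destroy its density in Ω, so every t_k is approached by
g^m(x₀) for arbitrarily large m. Choosing m so that g^m(x₀) shadows t_k for k further steps,
the point ĝ^{m+k}(x̄) has coordinates g^{k-i}(g^m(x₀)) ≈ g^{k-i}(t_k) = t_i for all i ≤ k.
-/

open Filter Topology Set

theorem mapClusterPt_cofinite_of_accPt {X ι : Type*} [TopologicalSpace X] [T1Space X]
    {u : ι → X} {s : Set X} {x : X} (hx : AccPt x (𝓟 s)) (hs : s ⊆ closure (range u)) :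
    MapClusterPt x cofinite u := by
  have hrange : AccPt x (𝓟 (range u)) := by
    rw [← mem_derivedSet, ← derivedSet_closure]
    exact hx.mono (principal_mono.2 hs)
  refine mapClusterPt_iff_frequently.2 fun U hU => frequently_cofinite_iff_infinite.2 ?_
  refine Set.Infinite.of_image u ?_
  rw [← preimage_ofPred_eq, image_preimage_eq_inter_range]
  exact Set.Infinite.of_accPt (hrange.nhds_inter hU)

section InverseLimit

variable {T : Type*} {g : T → T}

theorem InvLim.iterate_apply_add (t : InvLim g) (i j : ℕ) : g^[j] (t.1 (i + j)) = t.1 i := by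
  induction j with
  | zero => rfl
  | succ j ih => rw [Function.iterate_succ_apply, ← add_assoc, t.2, ih]

theorem InvLim.exists_mem_of_subset_image {Ω : Set T} (hΩ : Ω ⊆ g '' Ω) {y : T}
    (hy : y ∈ Ω) :
    ∃ x : InvLim g, x.1 0 = y ∧ ∀ i, x.1 i ∈ Ω := by
  choose pre hpre hgpre using fun z : Ω => hΩ z.2
  let x : ℕ → Ω := fun i => (fun z => ⟨pre z, hpre z⟩)^[i] ⟨y, hy⟩
  refine ⟨⟨fun i => x i, fun i => ?_⟩, rfl, fun i => (x i).2⟩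
  simp only [x, Function.iterate_succ_apply']
  exact hgpre _

theorem shiftMap_apply (t : InvLim g) (i : ℕ) : (shiftMap g t).1 i = g (t.1 i) := by
  cases i with
  | zero => rfl
  | succ j => exact (t.2 j).symm

theorem iterate_shiftMap_apply (t : InvLim g) (n i : ℕ) :
    ((shiftMap g)^[n] t).1 i = g^[n] (t.1 i) := by
  induction n with
  | zero => rfl
  | succ n ih => rw [Function.iterate_succ_apply', Function.iterate_succ_apply', shiftMap_apply, ih]

theorem frequently_forall_le_dist_iterate_shiftMap_lt [PseudoMetricSpace T] (hg : Continuous g)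
    {x t : InvLim g} {k : ℕ} (hx : MapClusterPt (t.1 k) atTop fun m => g^[m] (x.1 0))
    {ε : ℝ} (hε : 0 < ε) :
    ∃ᶠ n in atTop, ∀ i ≤ k, dist (((shiftMap g)^[n] x).1 i) (t.1 i) < ε := by
  have hshadow : ∀ᶠ y in 𝓝 (t.1 k), ∀ j ∈ Iic k, dist (g^[j] y) (g^[j] (t.1 k)) < ε :=
    (eventually_all_finite (finite_Iic k)).2 fun j _ =>
      ((hg.iterate j).tendsto _).eventually (Metric.ball_mem_nhds _ hε)
  refine (tendsto_add_atTop_nat k).frequently_map _ (fun m hm i hi => ?_) (hx.frequently hshadow)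
  obtain ⟨j, rfl⟩ := Nat.exists_eq_add_of_le hi
  have hx0 : g^[i] (x.1 i) = x.1 0 := by simpa using x.iterate_apply_add 0 i
  rw [iterate_shiftMap_apply, ← t.iterate_apply_add i j, show m + (i + j) = j + m + i by omega,
    Function.iterate_add_apply, Function.iterate_add_apply, hx0]
  exact hm j (by simp)

end InverseLimit

theorem stmt9_general {T : Type*} [MetricSpace T]
    (g : T → T) (hgc : Continuous g)
    (Ω : Set T) (hinv : g '' Ω = Ω)
    (hacc : ∀ x ∈ Ω, AccPt x (Filter.principal Ω))
    (x₀ : T) (hx₀ : x₀ ∈ Ω)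
    (hdense : Ω ⊆ closure (Set.range fun n : ℕ => g^[n] x₀))
    (tbar : InvLim g) (ht : ∀ i : ℕ, tbar.1 i ∈ Ω) :
    ∃ xbar : InvLim g, (∀ i : ℕ, xbar.1 i ∈ Ω) ∧
      ∃ n : ℕ → ℕ, StrictMono n ∧
        Filter.Tendsto (fun k : ℕ => (shiftMap g)^[n k] xbar) Filter.atTop (nhds tbar) := by
  obtain ⟨xbar, hxbar0, hxbarΩ⟩ := InvLim.exists_mem_of_subset_image hinv.superset hx₀
  have hcluster : ∀ k, MapClusterPt (tbar.1 k) atTop fun m => g^[m] (xbar.1 0) := fun k => by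
    rw [hxbar0, ← Nat.cofinite_eq_atTop]
    exact mapClusterPt_cofinite_of_accPt (hacc _ (ht k)) hdense
  obtain ⟨n, hn, hclose⟩ := extraction_forall_of_frequently fun k =>
    frequently_forall_le_dist_iterate_shiftMap_lt hgc (hcluster k) (Nat.one_div_pos_of_nat (n := k))
  refine ⟨xbar, hxbarΩ, n, hn, ?_⟩
  rw [tendsto_subtype_rng, tendsto_pi_nhds]
  intro i
  rw [tendsto_iff_dist_tendsto_zero]
  refine squeeze_zero' (.of_forall fun k => dist_nonneg) ?_ tendsto_one_div_add_atTop_nhds_zero_nat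
  filter_upwards [eventually_ge_atTop i] with k hk using (hclose k i hk).le

/-- if Ω is a nonempty compact g-invariant set without isolated points
carrying a dense forward orbit, then every t̄ ∈ Π_g with entries in Ω lies in the
ω-limit set (under the shift ĝ) of some x̄ ∈ Π_g with entries in Ω. -/
theorem stmt9 {T : Type*} [MetricSpace T] [CompactSpace T]
    (g : T → T) (hgc : Continuous g) (hgs : Function.Surjective g)
    (Ω : Set T) (hne : Ω.Nonempty) (hcomp : IsCompact Ω) (hinv : g '' Ω = Ω)
    (hacc : ∀ x ∈ Ω, AccPt x (Filter.principal Ω))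
    (x₀ : T) (hx₀ : x₀ ∈ Ω)
    (hdense : Ω ⊆ closure (Set.range fun n : ℕ => g^[n] x₀))
    (tbar : InvLim g) (ht : ∀ i : ℕ, tbar.1 i ∈ Ω) :
    ∃ xbar : InvLim g, (∀ i : ℕ, xbar.1 i ∈ Ω) ∧
      ∃ n : ℕ → ℕ, StrictMono n ∧
        Filter.Tendsto (fun k : ℕ => (shiftMap g)^[n k] xbar) Filter.atTop (nhds tbar) :=
  stmt9_general g hgc Ω hinv hacc x₀ hx₀ hdense tbar ht
end

section
/- Let q ∈ T satisfy g^p(q) = q with p ≥ 1, let Orb_g(q) = {q, g(q), …, g^{p−1}(q)}, and assume NW(g) ∩ g^{-1}(Orb_g(q)) = Orb_g(q). Let Q be the unique point of ⋂_{m ≥ 0} F^{mp}({q} × N), and let Orb_F(Q) = {Q, F(Q), …, F^{p−1}(Q)}. Then NW(F) ∩ p₁^{-1}(Orb_g(q)) = Orb_F(Q). -/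
/-- A periodic point is non-wandering. -/
lemma nonWandering_of_periodic {X : Type*} [TopologicalSpace X] {h : X → X} {x : X}
    {n : ℕ} (hn : 1 ≤ n) (hx : h^[n] x = x) : NonWandering h x := by
  intro U hU
  exact ⟨n, hn, x, ⟨x, mem_of_mem_nhds hU, hx⟩, mem_of_mem_nhds hU⟩

/-- The image of a non-wandering point is non-wandering. -/
lemma nonWandering_apply {X : Type*} [TopologicalSpace X] {h : X → X} (hc : Continuous h)
    {x : X} (hx : NonWandering h x) : NonWandering h (h x) := by
  intro U hU
  obtain ⟨n, hn, u, ⟨z, hz, rfl⟩, hu⟩ := hx (h ⁻¹' U) (hc.continuousAt.preimage_mem_nhds hU)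
  refine ⟨n, hn, h (h^[n] z), ⟨h z, hz, ?_⟩, hu⟩
  rw [← Function.iterate_succ_apply, Function.iterate_succ_apply']

/-- For a non-periodic point, returns with bounded time can be excluded by a small ball. -/
lemma avoid_aux {X : Type*} [MetricSpace X] {h : X → X} (hc : Continuous h)
    {y : X} (hnp : ∀ n, 1 ≤ n → h^[n] y ≠ y) (M : ℕ) :
    ∃ δ > 0, ∀ n, 1 ≤ n → n ≤ M → ∀ z, dist z y < δ → ¬ dist (h^[n] z) y < δ := by
  induction M with
  | zero => exact ⟨1, one_pos, fun n h1 h0 => by omega⟩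
  | succ M ih =>
    obtain ⟨δ, hδ, hA⟩ := ih
    have hρ : 0 < dist (h^[M + 1] y) y := dist_pos.mpr (hnp (M + 1) (by omega))
    set ρ := dist (h^[M + 1] y) y with hρdef
    have hcont : ContinuousAt (h^[M + 1]) y := (hc.iterate (M + 1)).continuousAt
    obtain ⟨δ', hδ', hd⟩ := Metric.continuousAt_iff.mp hcont (ρ / 2) (by linarith)
    refine ⟨min δ (min δ' (ρ / 2)), by positivity, fun n h1 hM z hz hcon => ?_⟩
    rcases Nat.lt_or_ge n (M + 1) with hn | hn
    · exact hA n h1 (by omega) z (lt_of_lt_of_le hz (min_le_left _ _))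
        (lt_of_lt_of_le hcon (min_le_left _ _))
    · have hnM : n = M + 1 := by omega
      subst hnM
      have h2 : dist (h^[M + 1] z) (h^[M + 1] y) < ρ / 2 :=
        hd (lt_of_lt_of_le hz (le_trans (min_le_right _ _) (min_le_left _ _)))
      have h3 : dist (h^[M + 1] z) y < ρ / 2 :=
        lt_of_lt_of_le hcon (le_trans (min_le_right _ _) (min_le_right _ _))
      have h4 := dist_triangle (h^[M + 1] y) (h^[M + 1] z) y
      rw [dist_comm (h^[M + 1] y) (h^[M + 1] z)] at h4
      linarith

/-- Iterates of an open map are open maps. -/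
lemma isOpenMap_iterate {X : Type*} [TopologicalSpace X] {h : X → X} (ho : IsOpenMap h)
    (n : ℕ) : IsOpenMap (h^[n]) := by
  induction n with
  | zero => exact IsOpenMap.id
  | succ n ih => rw [Function.iterate_succ]; exact ih.comp ho

/-- let g^p(q) = q with p ≥ 1, Orb_g(q) = {q, g(q), …, g^{p-1}(q)},
and assume NW(g) ∩ g⁻¹(Orb_g(q)) = Orb_g(q).  If Q is the unique point of
⋂_{m ≥ 0} F^{mp}({q} × N) and Orb_F(Q) = {Q, F(Q), …, F^{p-1}(Q)}, then
NW(F) ∩ p₁⁻¹(Orb_g(q)) = Orb_F(Q). -/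
theorem stmt11 {T N : Type*} [MetricSpace T] [CompactSpace T] [Nonempty T]
    [MetricSpace N] [CompactSpace N] [Nonempty N]
    (g : T → T) (hgc : Continuous g) (hgs : Function.Surjective g)
    (hgcov : IsCoveringMap g)
    (F : T × N → T × N) (hFc : Continuous F) (hFi : Function.Injective F)
    (hfib : ∀ p : T × N, (F p).1 = g p.1)
    (C lam : ℝ) (hC : 0 < C) (hlam0 : 0 < lam) (hlam1 : lam < 1)
    (hcontr : ∀ (t : T) (n : ℕ),
      Metric.diam (F^[n] '' ({t} ×ˢ (Set.univ : Set N))) ≤ C * lam ^ n)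
    (q : T) (p : ℕ) (hp : 1 ≤ p) (hq : g^[p] q = q)
    (hOrb : {x | NonWandering g x} ∩ g ⁻¹' {x | ∃ i < p, g^[i] q = x}
      = {x | ∃ i < p, g^[i] q = x})
    (Q : T × N)
    (hQ : (⋂ m : ℕ, F^[m * p] '' ({q} ×ˢ (Set.univ : Set N))) = {Q}) :
    {y : T × N | NonWandering F y} ∩ Prod.fst ⁻¹' {x | ∃ i < p, g^[i] q = x}
      = {y | ∃ i < p, F^[i] Q = y} := by
  classical
  set S₀ : Set (T × N) := {q} ×ˢ (Set.univ : Set N) with hS₀def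
  -- the fibered structure of iterates
  have hfibn : ∀ (n : ℕ) (z : T × N), (F^[n] z).1 = g^[n] z.1 := by
    intro n
    induction n with
    | zero => intro z; rfl
    | succ n ih =>
      intro z
      rw [Function.iterate_succ_apply, Function.iterate_succ_apply, ih, hfib]
  -- q is fixed by g^[k*p]
  have hqk : ∀ k : ℕ, g^[k * p] q = q := by
    intro k
    induction k with
    | zero => simp
    | succ k ih =>
      rw [show (k + 1) * p = p + k * p by ring, Function.iterate_add_apply, ih, hq]
  -- F^[d*p] maps S₀ into S₀
  have hS0d : ∀ d : ℕ, F^[d * p] '' S₀ ⊆ S₀ := by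
    rintro d z ⟨s, hs, rfl⟩
    refine ⟨?_, trivial⟩
    have hs1 : s.1 = q := hs.1
    show (F^[d * p] s).1 ∈ ({q} : Set T)
    rw [hfibn, hs1, hqk d]
    rfl
  -- monotonicity of the nested images
  have hsub : ∀ a b : ℕ, a ≤ b → F^[b * p] '' S₀ ⊆ F^[a * p] '' S₀ := by
    rintro a b hab z ⟨s, hs, rfl⟩
    refine ⟨F^[(b - a) * p] s, hS0d (b - a) ⟨s, hs, rfl⟩, ?_⟩
    rw [← Function.iterate_add_apply, ← add_mul, Nat.add_sub_cancel' hab]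
  have hQmem : ∀ m : ℕ, Q ∈ F^[m * p] '' S₀ := by
    intro m
    have hQin : Q ∈ ⋂ m : ℕ, F^[m * p] '' S₀ := by rw [hQ]; exact rfl
    exact Set.mem_iInter.mp hQin m
  have hQ1 : Q.1 = q := by
    have h0 := hQmem 0
    simp only [Nat.zero_mul, Function.iterate_zero, Set.image_id] at h0
    exact h0.1
  have hFpQ : F^[p] Q = Q := by
    have hmem : F^[p] Q ∈ ⋂ m : ℕ, F^[m * p] '' S₀ := by
      refine Set.mem_iInter.mpr fun m => ?_
      obtain ⟨s, hs, hsQ⟩ := hQmem m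
      have h1 : F^[p] Q ∈ F^[(m + 1) * p] '' S₀ :=
        ⟨s, hs, by rw [show (m + 1) * p = p + m * p by ring, Function.iterate_add_apply, hsQ]⟩
      exact hsub m (m + 1) (by omega) h1
    rw [hQ] at hmem
    exact hmem
  have hQi : ∀ i m : ℕ, F^[i] Q ∈ F^[m * p + i] '' S₀ := by
    intro i m
    obtain ⟨s, hs, hsQ⟩ := hQmem m
    exact ⟨s, hs, by
      rw [show m * p + i = i + m * p by ring, Function.iterate_add_apply, hsQ]⟩
  -- convergence: two points in all the sets F^[m*p+i] '' S₀ coincide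
  have hconv : ∀ (i : ℕ) (y z : T × N), (∀ m : ℕ, y ∈ F^[m * p + i] '' S₀) →
      (∀ m : ℕ, z ∈ F^[m * p + i] '' S₀) → y = z := by
    intro i y z hy hz
    have hb : ∀ m : ℕ, dist y z ≤ C * lam ^ (m * p + i) := by
      intro m
      have hcomp : IsCompact (F^[m * p + i] '' S₀) :=
        (isCompact_singleton.prod isCompact_univ).image (hFc.iterate _)
      exact le_trans (Metric.dist_le_diam_of_mem hcomp.isBounded (hy m) (hz m))
        (hcontr q (m * p + i))
    have htend : Filter.Tendsto (fun m : ℕ => C * lam ^ (m * p + i))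
        Filter.atTop (nhds 0) := by
      have h1 : Filter.Tendsto (fun m : ℕ => (lam ^ p) ^ m) Filter.atTop (nhds 0) :=
        tendsto_pow_atTop_nhds_zero_of_lt_one (pow_nonneg hlam0.le p)
          (pow_lt_one₀ hlam0.le hlam1 (by omega))
      have h2 := h1.const_mul (C * lam ^ i)
      rw [mul_zero] at h2
      refine h2.congr fun m => ?_
      rw [pow_add, pow_mul]
      ring
    have hd0 : dist y z ≤ 0 := ge_of_tendsto' htend hb
    exact dist_le_zero.mp hd0
  -- non-wandering points of g that eventually enter the orbit are in the orbit
  have horbit : ∀ (l : ℕ) (x : T), NonWandering g x →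
      g^[l] x ∈ {x | ∃ i < p, g^[i] q = x} → x ∈ {x | ∃ i < p, g^[i] q = x} := by
    intro l
    induction l with
    | zero => intro x _ hx; simpa using hx
    | succ l ih =>
      intro x hxNW hx
      have hgx : g x ∈ {x | ∃ i < p, g^[i] q = x} :=
        ih (g x) (nonWandering_apply hgc hxNW) (by rwa [← Function.iterate_succ_apply])
      have hmem : x ∈ {x | NonWandering g x} ∩ g ⁻¹' {x | ∃ i < p, g^[i] q = x} :=
        ⟨hxNW, hgx⟩
      rw [hOrb] at hmem
      exact hmem
  ext y
  constructor
  · rintro ⟨hyNW, hyO⟩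
    obtain ⟨i, hip, hiy⟩ := hyO
    by_cases hper : ∃ n, 1 ≤ n ∧ F^[n] y = y
    · -- periodic case
      obtain ⟨n, hn1, hny⟩ := hper
      have hinp : i ≤ n * p := le_trans hip.le (Nat.le_mul_of_pos_left p (by omega))
      have hfix : F^[n * p] y = y := by
        rw [Function.iterate_mul]
        exact Function.iterate_fixed hny p
      set w := F^[n * p - i] y with hwdef
      have hw1 : w.1 = q := by
        rw [hwdef, hfibn, ← hiy, ← Function.iterate_add_apply, Nat.sub_add_cancel hinp, hqk n]
      have hwS : w ∈ S₀ := ⟨hw1, trivial⟩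
      have hwfix : F^[n * p] w = w := by
        rw [hwdef, ← Function.iterate_add_apply, add_comm, Function.iterate_add_apply, hfix]
      have hwQ : w = Q := by
        have hmem : w ∈ ⋂ m : ℕ, F^[m * p] '' S₀ := by
          refine Set.mem_iInter.mpr fun m => ?_
          have h1 : w ∈ F^[m * n * p] '' S₀ := by
            refine ⟨w, hwS, ?_⟩
            have h2 : F^[n * p * m] w = w := by
              rw [Function.iterate_mul]
              exact Function.iterate_fixed hwfix m
            rw [show m * n * p = n * p * m by ring]
            exact h2
          exact hsub m (m * n) (Nat.le_mul_of_pos_right m (by omega)) h1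
        rw [hQ] at hmem
        exact hmem
      refine ⟨i, hip, ?_⟩
      rw [← hwQ, hwdef, ← Function.iterate_add_apply, Nat.add_sub_cancel' hinp, hfix]
    · -- non-periodic case
      push_neg at hper
      have hnp : ∀ n, 1 ≤ n → F^[n] y ≠ y := hper
      have hkey : ∀ m : ℕ, y ∈ F^[m * p + i] '' S₀ := by
        intro m
        set l := m * p + i with hldef
        obtain ⟨δ, hδ, hA⟩ := avoid_aux hFc hnp l
        -- y is in the image of F^[l]
        have hclosed : IsClosed (F^[l] '' (Set.univ : Set (T × N))) :=
          ((isCompact_univ.image (hFc.iterate l))).isClosed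
        have hmemcl : y ∈ F^[l] '' Set.univ := by
          rw [← hclosed.closure_eq]
          refine Metric.mem_closure_iff.mpr fun ε hε => ?_
          have hU : Metric.ball y (min ε δ) ∈ nhds y :=
            Metric.ball_mem_nhds y (lt_min hε hδ)
          obtain ⟨n, hn1, u, ⟨z, hzU, rfl⟩, huU⟩ := hyNW _ hU
          have hnl : l < n := by
            by_contra hc2
            exact hA n hn1 (by omega) z
              (lt_of_lt_of_le (Metric.mem_ball.mp hzU) (min_le_right _ _))
              (lt_of_lt_of_le (Metric.mem_ball.mp huU) (min_le_right _ _))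
          obtain ⟨d, rfl⟩ : ∃ d, n = l + d := ⟨n - l, by omega⟩
          refine ⟨F^[l + d] z, ⟨F^[d] z, trivial,
            (Function.iterate_add_apply F l d z).symm⟩, ?_⟩
          rw [dist_comm]
          exact lt_of_lt_of_le (Metric.mem_ball.mp huU) (min_le_left _ _)
        obtain ⟨w, -, hw⟩ := hmemcl
        -- the base point of w is non-wandering for g
        have hτNW : NonWandering g w.1 := by
          intro V hV
          obtain ⟨O, hOV, hOopen, hτO⟩ := mem_nhds_iff.mp hV
          have hopenmap : IsOpenMap (g^[l]) :=
            isOpenMap_iterate hgcov.isLocalHomeomorph.isOpenMap l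
          have hBadclosed : IsClosed (F^[l] '' (Prod.fst ⁻¹' Oᶜ)) :=
            (((hOopen.isClosed_compl).preimage continuous_fst).isCompact.image
              (hFc.iterate l)).isClosed
          have hUopen : IsOpen (Prod.fst ⁻¹' (g^[l] '' O) ∩ (F^[l] '' (Prod.fst ⁻¹' Oᶜ))ᶜ
              ∩ Metric.ball y δ) :=
            (((hopenmap O hOopen).preimage continuous_fst).inter
              hBadclosed.isOpen_compl).inter Metric.isOpen_ball
          have hyU : y ∈ Prod.fst ⁻¹' (g^[l] '' O) ∩ (F^[l] '' (Prod.fst ⁻¹' Oᶜ))ᶜ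
              ∩ Metric.ball y δ := by
            refine ⟨⟨⟨w.1, hτO, ?_⟩, ?_⟩, Metric.mem_ball_self hδ⟩
            · rw [← hfibn, hw]
            · intro hbad
              obtain ⟨a, ha, hay⟩ := hbad
              have haw : a = w := (hFi.iterate l) (hay.trans hw.symm)
              rw [haw] at ha
              exact ha hτO
          obtain ⟨n, hn1, u, ⟨z, hzU, rfl⟩, huU⟩ := hyNW _ (hUopen.mem_nhds hyU)
          have hnl : l < n := by
            by_contra hc2
            exact hA n hn1 (by omega) z (Metric.mem_ball.mp hzU.2) (Metric.mem_ball.mp huU.2)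
          obtain ⟨d, rfl⟩ : ∃ d, n = l + d := ⟨n - l, by omega⟩
          have hsplit : F^[l + d] z = F^[l] (F^[d] z) := Function.iterate_add_apply F l d z
          have hinO : (F^[d] z).1 ∈ O := by
            by_contra hc3
            exact huU.1.2 ⟨F^[d] z, hc3, hsplit.symm⟩
          obtain ⟨v, hvO, hvz⟩ := hzU.1.1
          have hgnv : g^[l + d] v ∈ O := by
            have hgv : g^[l + d] v = (F^[d] z).1 := by
              rw [add_comm l d, Function.iterate_add_apply, hvz, hfibn]
            rw [hgv]
            exact hinO
          exact ⟨l + d, hn1, g^[l + d] v, ⟨v, hOV hvO, rfl⟩, hOV hgnv⟩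
        -- hence it belongs to the orbit, and in fact equals q
        have hgl : g^[l] w.1 = g^[i] q := by rw [← hfibn, hw, ← hiy]
        have hτOrb : w.1 ∈ {x | ∃ i < p, g^[i] q = x} :=
          horbit l w.1 hτNW (by rw [hgl]; exact ⟨i, hip, rfl⟩)
        obtain ⟨j, hjp, hjτ⟩ := hτOrb
        have hexp : p - i + l = p + m * p := by
          rw [hldef]
          have h5 : p - i + (m * p + i) = p + m * p := by
            generalize m * p = K
            omega
          exact h5
        have hq'' : g^[p + m * p] q = q := by
          rw [show p + m * p = (m + 1) * p by ring]
          exact hqk (m + 1)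
        have h1 : g^[p - i] (g^[l] w.1) = q := by
          rw [hgl, ← Function.iterate_add_apply, show p - i + i = p by omega, hq]
        have h2 : g^[p - i] (g^[l] w.1) = w.1 := by
          rw [← Function.iterate_add_apply, hexp, ← hjτ, ← Function.iterate_add_apply,
            show p + m * p + j = j + (p + m * p) by ring, Function.iterate_add_apply, hq'']
        have hτq : w.1 = q := h2.symm.trans h1
        exact ⟨w, ⟨hτq, trivial⟩, hw⟩
      exact ⟨i, hip, hconv i (F^[i] Q) y (hQi i) hkey⟩
  · rintro ⟨i, hip, rfl⟩
    refine ⟨?_, ⟨i, hip, ?_⟩⟩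
    · refine nonWandering_of_periodic hp ?_
      rw [← Function.iterate_add_apply, add_comm p i, Function.iterate_add_apply, hFpQ]
    · rw [hfibn, hQ1]
end

section
/- Let Ω ⊆ NW(g) be a set satisfying g^{-1}(Ω) = Ω. Then NW(F) ∩ p₁^{-1}(Ω) = S ∩ p₁^{-1}(Ω); in particular, every point of S ∩ p₁^{-1}(Ω) is a non-wandering point of F. -/
open Set Filter Topology Function Metric

theorem Function.iterate_mem_range_iterate {X : Type*} (h : X → X) {l n : ℕ} (hln : l ≤ n)
    (x : X) : h^[n] x ∈ range h^[l] :=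
  ⟨h^[n - l] x, by rw [← iterate_add_apply, Nat.add_sub_cancel' hln]⟩

theorem Function.IsPeriodicPt.mem_range_iterate {X : Type*} {h : X → X} {y : X} {n : ℕ}
    (hy : IsPeriodicPt h n y) (hn : 0 < n) (l : ℕ) : y ∈ range h^[l] :=
  (hy.mul_const l).eq ▸ iterate_mem_range_iterate h (Nat.le_mul_of_pos_left l hn) y

theorem NonWandering.mem_range_iterate {X : Type*} [TopologicalSpace X] [T2Space X]
    {h : X → X} {y : X} (hc : Continuous h) (hy : NonWandering h y) {l : ℕ}
    (hl : IsClosed (range h^[l])) : y ∈ range h^[l] := by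
  by_contra hyl
  have hsep : ∀ n ∈ Finset.Ico 1 l, ∀ᶠ p in 𝓝 (y, y), h^[n] p.1 ≠ p.2 := fun n hn =>
    ((hc.iterate n).continuousAt.prodMap' continuousAt_id).eventually_mem <|
      isClosed_diagonal.isOpen_compl.mem_nhds fun hper =>
        hyl (IsPeriodicPt.mem_range_iterate hper (Finset.mem_Ico.1 hn).1 l)
  have hout : ∀ᶠ p in 𝓝 y ×ˢ 𝓝 y, p.2 ∉ range h^[l] :=
    Eventually.prod_inr (hl.isOpen_compl.mem_nhds hyl : ∀ᶠ x in 𝓝 y, x ∉ range h^[l]) _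
  rw [nhds_prod_eq] at hsep
  obtain ⟨U, hU, hUsep⟩ := eventually_prod_self_iff
    (r := fun a b => (∀ n ∈ Finset.Ico 1 l, h^[n] a ≠ b) ∧ b ∉ range h^[l]) |>.1
    (((eventually_all_finset _).2 hsep).and hout)
  obtain ⟨n, hn, _, ⟨z, hz, rfl⟩, hnz⟩ := hy U hU
  obtain ⟨hne, hnotin⟩ := hUsep z hz _ hnz
  rcases lt_or_ge n l with hnl | hln
  · exact hne n (Finset.mem_Ico.2 ⟨hn, hnl⟩) rfl
  · exact hnotin (iterate_mem_range_iterate h hln z)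

theorem nonWandering_of_forall_exists_iterate_eq {T N : Type*} [MetricSpace T] [MetricSpace N]
    [CompactSpace T] [CompactSpace N] {g : T → T} {F : T × N → T × N} (hFc : Continuous F)
    (hfib : Semiconj Prod.fst F g) {r : ℕ → ℝ} (hr : Tendsto r atTop (𝓝 0))
    (hcontr : ∀ t n, diam (F^[n] '' ({t} ×ˢ univ)) ≤ r n) {y : T × N}
    (hy : ∀ k, ∃ p, F^[k] p = y ∧ NonWandering g p.1) : NonWandering F y := by
  intro U hU
  obtain ⟨ε, hε, hball⟩ := Metric.mem_nhds_iff.1 hU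
  obtain ⟨k, hk⟩ := (hr.eventually (gt_mem_nhds (half_pos hε))).exists
  obtain ⟨⟨t, z⟩, rfl, ht⟩ := hy k
  obtain ⟨δ, hδ, hδk⟩ := Metric.uniformContinuous_iff.1
    (CompactSpace.uniformContinuous_of_continuous (hFc.iterate k)) (ε / 2) (half_pos hε)
  have hnear : ∀ s ∈ ball t δ, ∀ w, dist (F^[k] (s, w)) (F^[k] (t, w)) < ε / 2 :=
    fun s hs w => hδk (by rwa [Prod.dist_eq, dist_self, max_eq_left dist_nonneg])
  have hfiber : ∀ w w', dist (F^[k] (t, w)) (F^[k] (t, w')) ≤ r k := by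
    have hbdd : Bornology.IsBounded (F^[k] '' ({t} ×ˢ univ)) :=
      ((isCompact_singleton.prod isCompact_univ).image (hFc.iterate k)).isBounded
    exact fun w w' => (dist_le_diam_of_mem hbdd (mem_image_of_mem _ (mk_mem_prod rfl (mem_univ w)))
      (mem_image_of_mem _ (mk_mem_prod rfl (mem_univ w')))).trans (hcontr t k)
  obtain ⟨m, hm, _, ⟨s, hs, rfl⟩, hms⟩ := ht (ball t δ) (ball_mem_nhds t hδ)
  obtain ⟨w, hw⟩ : ∃ w, F^[m] (s, z) = (g^[m] s, w) :=
    ⟨_, Prod.ext (hfib.iterate_right m (s, z)) rfl⟩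
  refine ⟨m, hm, F^[m] (F^[k] (s, z)), mem_image_of_mem _ (hball ?_), hball ?_⟩
  · exact mem_ball.2 ((hnear s hs z).trans (half_lt_self hε))
  · rw [mem_ball, ← iterate_add_apply, add_comm, iterate_add_apply, hw]
    calc dist (F^[k] (g^[m] s, w)) (F^[k] (t, z))
        ≤ dist (F^[k] (g^[m] s, w)) (F^[k] (t, w)) + dist (F^[k] (t, w)) (F^[k] (t, z)) :=
          dist_triangle _ _ _
      _ < ε / 2 + ε / 2 := add_lt_add_of_lt_of_le (hnear _ hms w) ((hfiber w z).trans hk.le)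
      _ = ε := add_halves ε

theorem stmt12_general {T N : Type*} [MetricSpace T] [CompactSpace T]
    [MetricSpace N] [CompactSpace N]
    (g : T → T)
    (F : T × N → T × N) (hFc : Continuous F)
    (hfib : ∀ p : T × N, (F p).1 = g p.1)
    (C lam : ℝ) (hlam0 : 0 < lam) (hlam1 : lam < 1)
    (hcontr : ∀ (t : T) (n : ℕ),
      Metric.diam (F^[n] '' ({t} ×ˢ (Set.univ : Set N))) ≤ C * lam ^ n)
    (S : Set (T × N)) (hS : S = ⋂ l : ℕ, F^[l] '' Set.univ)
    (Ω : Set T) (hΩNW : Ω ⊆ {x | NonWandering g x}) (hΩinv : g ⁻¹' Ω = Ω) :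
    {y : T × N | NonWandering F y} ∩ Prod.fst ⁻¹' Ω = S ∩ Prod.fst ⁻¹' Ω ∧
      ∀ y ∈ S ∩ Prod.fst ⁻¹' Ω, NonWandering F y := by
  subst hS
  simp only [image_univ]
  have hSΩ : ∀ y ∈ (⋂ l, range F^[l]) ∩ Prod.fst ⁻¹' Ω, NonWandering F y := by
    rintro y ⟨hyS, hyΩ⟩
    have hr : Tendsto (fun n => C * lam ^ n) atTop (𝓝 0) := by
      simpa using (tendsto_pow_atTop_nhds_zero_of_lt_one hlam0.le hlam1).const_mul C
    refine nonWandering_of_forall_exists_iterate_eq hFc hfib hr hcontr fun k => ?_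
    obtain ⟨p, hp⟩ := mem_iInter.1 hyS k
    have hpΩ : g^[k] p.1 ∈ Ω := by rwa [← Semiconj.iterate_right hfib k p, hp]
    exact ⟨p, hp, hΩNW ((IsFixedPt.preimage_iterate hΩinv k).eq ▸ hpΩ)⟩
  refine ⟨Subset.antisymm (fun y hy => ⟨?_, hy.2⟩) (fun y hy => ⟨hSΩ y hy, hy.2⟩), hSΩ⟩
  exact mem_iInter.2 fun l => hy.1.mem_range_iterate hFc (isCompact_range (hFc.iterate l)).isClosed

/-- let Ω ⊆ NW(g) satisfy g⁻¹(Ω) = Ω.  Then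
NW(F) ∩ p₁⁻¹(Ω) = S ∩ p₁⁻¹(Ω); in particular every point of S ∩ p₁⁻¹(Ω)
is a non-wandering point of F. -/
theorem stmt12 {T N : Type*} [MetricSpace T] [CompactSpace T] [Nonempty T]
    [MetricSpace N] [CompactSpace N] [Nonempty N]
    (g : T → T) (hgc : Continuous g) (hgs : Function.Surjective g)
    (hgcov : IsCoveringMap g)
    (F : T × N → T × N) (hFc : Continuous F) (hFi : Function.Injective F)
    (hfib : ∀ p : T × N, (F p).1 = g p.1)
    (C lam : ℝ) (hC : 0 < C) (hlam0 : 0 < lam) (hlam1 : lam < 1)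
    (hcontr : ∀ (t : T) (n : ℕ),
      Metric.diam (F^[n] '' ({t} ×ˢ (Set.univ : Set N))) ≤ C * lam ^ n)
    (S : Set (T × N)) (hS : S = ⋂ l : ℕ, F^[l] '' Set.univ)
    (Ω : Set T) (hΩNW : Ω ⊆ {x | NonWandering g x}) (hΩinv : g ⁻¹' Ω = Ω) :
    {y : T × N | NonWandering F y} ∩ Prod.fst ⁻¹' Ω = S ∩ Prod.fst ⁻¹' Ω ∧
      ∀ y ∈ S ∩ Prod.fst ⁻¹' Ω, NonWandering F y :=
  stmt12_general g F hFc hfib C lam hlam0 hlam1 hcontr S hS Ω hΩNW hΩinv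
end

section
/- The derivative of φ satisfies φ′(x) ≥ ε for every x ∈ ℝ. -/
/-- the derivative of φ(x) = d·x + (ε − d)·x·U(x) satisfies
φ′(x) ≥ ε for every x ∈ ℝ. -/
theorem stmt14 (d : ℕ) (hd : 2 ≤ d) (ε δ : ℝ)
    (hε : 0 < ε) (hε1 : ε < 1) (hδ : 0 < δ) (hδ4 : δ < 1 / 4)
    (U : ℝ → ℝ) (hUdiff : Differentiable ℝ U)
    (hU0le : ∀ x : ℝ, 0 ≤ U x) (hUle1 : ∀ x : ℝ, U x ≤ 1)
    (hUone : ∀ x ∈ Set.Icc (-(δ / 2)) (δ / 2), U x = 1)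
    (hUzero : ∀ x : ℝ, δ ≤ |x| → U x = 0)
    (hU'incr : ∀ x ∈ Set.Icc (-δ) (-(δ / 2)), 0 ≤ deriv U x)
    (hU'decr : ∀ x ∈ Set.Icc (δ / 2) δ, deriv U x ≤ 0)
    (φ : ℝ → ℝ) (hφ : ∀ x : ℝ, φ x = (d : ℝ) * x + (ε - (d : ℝ)) * x * U x) :
    ∀ x : ℝ, ε ≤ deriv φ x := by
  intro x
  -- key bound: U x + x * deriv U x ≤ 1
  have hS : U x + x * deriv U x ≤ 1 := by
    rcases le_or_gt |x| (δ / 2) with h1 | h1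
    · -- U attains global max 1 at x, so deriv U x = 0
      have hx1 : U x = 1 := hUone x (abs_le.mp h1)
      have hmax : IsLocalMax U x :=
        Filter.Eventually.of_forall fun y => by rw [hx1]; exact hUle1 y
      rw [hmax.deriv_eq_zero, hx1]; ring_nf; simp
    · rcases le_or_gt δ |x| with h2 | h2
      · -- U attains global min 0 at x, so deriv U x = 0
        have hx0 : U x = 0 := hUzero x h2
        have hmin : IsLocalMin U x :=
          Filter.Eventually.of_forall fun y => by rw [hx0]; exact hU0le y
        rw [hmin.deriv_eq_zero, hx0]; norm_num
      · -- δ/2 < |x| < δ : x * deriv U x ≤ 0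
        have hxd : x * deriv U x ≤ 0 := by
          rcases le_or_gt 0 x with hx | hx
          · have hx' : x ∈ Set.Icc (δ / 2) δ := by
              rw [abs_of_nonneg hx] at h1 h2
              exact ⟨h1.le, h2.le⟩
            exact mul_nonpos_of_nonneg_of_nonpos hx (hU'decr x hx')
          · have hx' : x ∈ Set.Icc (-δ) (-(δ / 2)) := by
              rw [abs_of_neg hx] at h1 h2
              constructor <;> linarith
            exact mul_nonpos_of_nonpos_of_nonneg hx.le (hU'incr x hx')
        linarith [hUle1 x]
  -- compute the derivative of φ
  have hder : HasDerivAt φ ((d : ℝ) + (ε - (d : ℝ)) * (U x + x * deriv U x)) x := by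
    have h1 : HasDerivAt (fun y : ℝ => y * U y) (1 * U x + x * deriv U x) x :=
      (hasDerivAt_id x).mul (hUdiff x).hasDerivAt
    have h2 : HasDerivAt (fun y : ℝ => (d : ℝ) * y + (ε - (d : ℝ)) * (y * U y))
        ((d : ℝ) * 1 + (ε - (d : ℝ)) * (1 * U x + x * deriv U x)) x :=
      ((hasDerivAt_id x).const_mul _).add (h1.const_mul _)
    have : φ = fun y : ℝ => (d : ℝ) * y + (ε - (d : ℝ)) * (y * U y) := by
      funext y; rw [hφ y]; ring
    rw [this]
    convert h2 using 1; ring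
  rw [hder.deriv]
  have hd2 : (2 : ℝ) ≤ (d : ℝ) := by exact_mod_cast hd
  nlinarith [hS, hd2]
end

section
/- Let d ≥ 2 be an integer and let λ be a real number with 0 < λ < (1/4)·sin(π/(2d−1)). Let g : ℝ/ℤ → ℝ/ℤ be a map such that any two distinct points t ≠ t′ with g(t) = g(t′) satisfy dist(t, t′) ≥ 1/(2d−1) in the quotient metric of ℝ/ℤ. Define F : (ℝ/ℤ) × D² → (ℝ/ℤ) × ℂ by F(t, z) = (g(t), λ·z + (1/2)·e(t)), where e(t) = exp(2πit) ∈ ℂ (well-defined on ℝ/ℤ) and D² = {z ∈ ℂ : |z| ≤ 1}. Then F is injective, and for all (t, z) ∈ (ℝ/ℤ) × D² one has |λ·z + (1/2)·e(t)| < 1, so F maps (ℝ/ℤ) × D² into (ℝ/ℤ) × int(D²). -/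
/-!
Two distinct points `t, t'` of a fibre of `g` are at least `1/(2d-1)` apart on the circle, so the
chord `|e(t) - e(t')|` is at least `2 sin(π/(2d-1)) > 8λ`. Equal second coordinates of `F` would
force `|e(t) - e(t')| / 2 = λ|z' - z| ≤ 2λ`, which is impossible. For fixed `t` the map
`z ↦ λz + e(t)/2` is injective, and `|λz + e(t)/2| ≤ λ + 1/2 < 1`.
-/

open Real Set Metric

theorem UnitAddCircle.norm_toCircle_sub_one (s : UnitAddCircle) :
    ‖(s.toCircle : ℂ) - 1‖ = 2 * sin (π * ‖s‖) := by
  induction s using QuotientAddGroup.induction_on with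
  | H x =>
    rw [UnitAddCircle.norm_eq]
    set δ := x - round x
    have hx : (δ : UnitAddCircle) = x := by simp [δ]
    have hδ : |δ| ≤ 1 / 2 := abs_sub_round x
    have hexp : Complex.exp (((2 * π / 1 * δ : ℝ) : ℂ) * Complex.I)
        = Complex.exp (Complex.I * ((2 * π * δ : ℝ) : ℂ)) := by
      push_cast; ring_nf
    rw [← hx, AddCircle.toCircle_apply_mk, Circle.coe_exp, hexp,
      Complex.norm_exp_I_mul_ofReal_sub_one, norm_mul, Real.norm_two, Real.norm_eq_abs,
      show 2 * π * δ / 2 = π * δ by ring]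
    have hnonneg : 0 ≤ sin (π * |δ|) :=
      sin_nonneg_of_nonneg_of_le_pi (by positivity) (by nlinarith [pi_pos])
    rw [← abs_of_nonneg hnonneg]
    rcases abs_choice δ with h | h <;> rw [h]
    rw [mul_neg, sin_neg, abs_neg]

theorem UnitAddCircle.norm_toCircle_sub_toCircle (t t' : UnitAddCircle) :
    ‖(t.toCircle : ℂ) - t'.toCircle‖ = 2 * sin (π * dist t t') := by
  calc ‖(t.toCircle : ℂ) - t'.toCircle‖ = ‖(t'.toCircle : ℂ) * ((t - t').toCircle - 1)‖ := by
        rw [mul_sub, ← Circle.coe_mul, ← AddCircle.toCircle_add, add_sub_cancel, mul_one]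
    _ = 2 * sin (π * dist t t') := by
        rw [norm_mul, Circle.norm_coe, one_mul, norm_toCircle_sub_one, dist_eq_norm]

theorem UnitAddCircle.two_mul_sin_le_norm_toCircle_sub {a : ℝ} (ha : -(1 / 2) ≤ a)
    {t t' : UnitAddCircle} (h : a ≤ dist t t') :
    2 * sin (π * a) ≤ ‖(t.toCircle : ℂ) - t'.toCircle‖ := by
  have hhalf : dist t t' ≤ 1 / 2 := by
    simpa [dist_eq_norm] using AddCircle.norm_le_half_period (1 : ℝ) (x := t - t') one_ne_zero
  rw [norm_toCircle_sub_toCircle]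
  gcongr
  exact sin_le_sin_of_le_of_le_pi_div_two (by nlinarith [pi_pos]) (by nlinarith [pi_pos])
    (by gcongr)

theorem injOn_prodMk_smul_add_closedBall {T S 𝕜 E : Type*} [NormedField 𝕜]
    [NormedAddCommGroup E] [NormedSpace 𝕜 E] {g : T → S} {c : T → E} {a : 𝕜} (ha : a ≠ 0)
    (hc : ∀ t t', t ≠ t' → g t = g t' → 2 * ‖a‖ < ‖c t - c t'‖) :
    InjOn (fun p : T × E => (g p.1, a • p.2 + c p.1)) (univ ×ˢ closedBall 0 1) := by
  rintro ⟨t, z⟩ ⟨-, hz⟩ ⟨t', z'⟩ ⟨-, hz'⟩ h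
  obtain ⟨hg, hfib⟩ := Prod.mk.inj h
  simp only at hg hfib
  obtain rfl : t = t' := by
    by_contra hne
    have hdiff : c t - c t' = a • (z' - z) := by
      rw [smul_sub]; linear_combination (norm := abel_nf) hfib
    have hz2 : ‖z' - z‖ ≤ 2 := by
      rw [mem_closedBall_zero_iff] at hz hz'
      linarith [norm_sub_le z' z]
    have := hc t t' hne hg
    rw [hdiff, norm_smul] at this
    nlinarith [norm_nonneg a]
  rw [smul_right_injective E ha (add_right_cancel hfib)]

/-- with 0 < λ < (1/4)·sin(π/(2d−1)) and g : ℝ/ℤ → ℝ/ℤ whose distinct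
preimage points are at distance ≥ 1/(2d−1), the map F(t, z) = (g(t), λz + (1/2)e(t))
is injective on (ℝ/ℤ) × D² and maps it into (ℝ/ℤ) × int(D²). -/
theorem stmt17 (d : ℕ) (hd : 2 ≤ d) (lam : ℝ)
    (hlam0 : 0 < lam)
    (hlam1 : lam < (1 / 4) * Real.sin (Real.pi / (2 * (d : ℝ) - 1)))
    (g : AddCircle (1 : ℝ) → AddCircle (1 : ℝ))
    (hg : ∀ t t' : AddCircle (1 : ℝ), t ≠ t' → g t = g t' →
      1 / (2 * (d : ℝ) - 1) ≤ dist t t')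
    (e : AddCircle (1 : ℝ) → ℂ)
    (he : ∀ x : ℝ, e (x : AddCircle (1 : ℝ)) =
      Complex.exp (2 * (Real.pi : ℂ) * Complex.I * (x : ℂ)))
    (F : AddCircle (1 : ℝ) × ℂ → AddCircle (1 : ℝ) × ℂ)
    (hF : ∀ (t : AddCircle (1 : ℝ)) (z : ℂ),
      F (t, z) = (g t, (lam : ℂ) * z + (1 / 2 : ℂ) * e t)) :
    Set.InjOn F ((Set.univ : Set (AddCircle (1 : ℝ))) ×ˢ {z : ℂ | ‖z‖ ≤ 1}) ∧
    ∀ (t : AddCircle (1 : ℝ)) (z : ℂ), ‖z‖ ≤ 1 →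
      ‖(lam : ℂ) * z + (1 / 2 : ℂ) * e t‖ < 1 := by
  have he_toCircle : e = fun t => (t.toCircle : ℂ) := funext fun t => by
    induction t using QuotientAddGroup.induction_on with
    | H x => rw [he, AddCircle.toCircle_apply_mk, Circle.coe_exp]; push_cast; ring_nf
  subst he_toCircle
  have hF_eq : F = fun p : AddCircle (1 : ℝ) × ℂ =>
      (g p.1, (lam : ℂ) • p.2 + (1 / 2 : ℂ) • (p.1.toCircle : ℂ)) :=
    funext fun ⟨t, z⟩ => hF t z
  have hsep_nonneg : 0 ≤ 1 / (2 * (d : ℝ) - 1) := by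
    have : (2 : ℝ) ≤ d := by exact_mod_cast hd
    exact one_div_nonneg.mpr (by linarith)
  refine ⟨?_, fun t z hz => ?_⟩
  · have hball : {z : ℂ | ‖z‖ ≤ 1} = closedBall 0 1 := by ext; simp
    rw [hF_eq, hball]
    refine injOn_prodMk_smul_add_closedBall
      (c := fun t : AddCircle (1 : ℝ) => (1 / 2 : ℂ) • (t.toCircle : ℂ))
      (Complex.ofReal_ne_zero.mpr hlam0.ne') fun t t' hne hgt => ?_
    have hchord := UnitAddCircle.two_mul_sin_le_norm_toCircle_sub (by linarith) (hg t t' hne hgt)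
    rw [mul_one_div] at hchord
    rw [← smul_sub, norm_smul, Complex.norm_real, Real.norm_of_nonneg hlam0.le]
    norm_num
    linarith
  · have htri := norm_add_le ((lam : ℂ) * z) ((1 / 2 : ℂ) * t.toCircle)
    rw [norm_mul, norm_mul, Complex.norm_real, Real.norm_of_nonneg hlam0.le, Circle.norm_coe]
      at htri
    norm_num at htri
    nlinarith [sin_le_one (π / (2 * (d : ℝ) - 1))]
end

section
/- Let d ≥ 2 be an integer, λ a real number with 0 < λ ≤ 1/4, θ ∈ ℝ, v₁ ∈ ℝ, and v₂₃ ∈ ℂ. If |v₁| ≥ ((2d−1)/4)·|v₂₃|, then (2d−1)·|v₁| ≥ ((2d−1)/4)·|π·i·e^{iθ}·v₁ + λ·v₂₃|. (In other words, the unstable cone {(v₁, v₂₃) : |v₁| ≥ ((2d−1)/4)·|v₂₃|} is invariant under the linear map (v₁, v₂₃) ↦ ((2d−1)·v₁, π·i·e^{iθ}·v₁ + λ·v₂₃).) -/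
open Complex

lemma norm_pi_mul_I_mul_exp_mul_ofReal (θ x : ℝ) :
    ‖(Real.pi : ℂ) * I * exp (θ * I) * x‖ = Real.pi * |x| := by
  simp [norm_exp_ofReal_mul_I, abs_of_pos Real.pi_pos]

/-- The constant `4` works because `π + 1/4 · 4/3 < 4`. -/
lemma norm_add_smul_le_four_mul {E : Type*} [SeminormedAddCommGroup E] [NormedSpace ℝ E]
    {c lam r : ℝ} {z w : E} (hc : 3 ≤ c) (hlam : |lam| ≤ 1 / 4)
    (hz : ‖z‖ ≤ Real.pi * r) (hw : c / 4 * ‖w‖ ≤ r) :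
    ‖z + lam • w‖ ≤ 4 * r := by
  have hw3 : ‖w‖ ≤ 4 / 3 * r := by nlinarith [norm_nonneg w]
  have hlamw : |lam| * ‖w‖ ≤ 1 / 4 * ‖w‖ := mul_le_mul_of_nonneg_right hlam (norm_nonneg w)
  calc ‖z + lam • w‖ ≤ ‖z‖ + |lam| * ‖w‖ := by
        rw [← Real.norm_eq_abs, ← norm_smul]; exact norm_add_le z _
    _ ≤ Real.pi * r + 1 / 3 * r := by linarith
    _ ≤ 4 * r := by nlinarith [Real.pi_lt_d2, norm_nonneg w]

/-- the unstable cone {(v₁, v₂₃) : |v₁| ≥ ((2d−1)/4)·|v₂₃|} is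
invariant under the linear map (v₁, v₂₃) ↦ ((2d−1)·v₁, π·i·e^{iθ}·v₁ + λ·v₂₃),
for 0 < λ ≤ 1/4. -/
theorem stmt18 (d : ℕ) (hd : 2 ≤ d) (lam : ℝ) (hlam0 : 0 < lam)
    (hlam1 : lam ≤ 1 / 4) (θ v₁ : ℝ) (v₂₃ : ℂ)
    (h : (2 * (d : ℝ) - 1) / 4 * ‖v₂₃‖ ≤ |v₁|) :
    (2 * (d : ℝ) - 1) / 4 *
      ‖(Real.pi : ℂ) * Complex.I * Complex.exp ((θ : ℂ) * Complex.I)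
        * (v₁ : ℂ) + (lam : ℂ) * v₂₃‖
      ≤ (2 * (d : ℝ) - 1) * |v₁| := by
  have hc : (3 : ℝ) ≤ 2 * d - 1 := by
    have : (2 : ℝ) ≤ d := by exact_mod_cast hd
    linarith
  have hbound := norm_add_smul_le_four_mul (z := (Real.pi : ℂ) * I * exp (θ * I) * v₁) hc
    (by rwa [abs_of_pos hlam0]) (norm_pi_mul_I_mul_exp_mul_ofReal θ v₁).le h
  rw [← real_smul (x := lam)]
  calc _ ≤ (2 * (d : ℝ) - 1) / 4 * (4 * |v₁|) := by gcongr
    _ = (2 * (d : ℝ) - 1) * |v₁| := by ring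
end
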